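/- arXiv:1608.03703 — 9 statements merged into one kernel-verified Lean document; each statement's English description precedes it below -/
import Mathlib

section
/- Let G act linearly and isometrically on a Hilbert space M, and let X be a random variable with E‖X‖² < ∞ and E(X) = t₀ ≠ 0. If P(sup_{g∈G} ⟨g·X, t₀⟩ > ⟨X, t₀⟩) > 0, then there exists a real number a⋆ > 1 such that F(a⋆ t₀) < F(t₀), where F(m) = E(inf_{g∈G} ‖g·X − m‖²). In particular the orbit [t₀] is not a Fréchet mean of [X] in the quotient space M/G. -/
/-!
For an isometric action, `‖g • x - a • t₀‖² = ‖x‖² + a²‖t₀‖² - 2a⟪g • x, t₀⟫`, so for `a ≥ 0`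
the infimum over the orbit only involves `sup_g ⟨g • x, t₀⟩`, and the variance along the ray
is the quadratic `F(a t₀) = E‖X‖² + a²‖t₀‖² - 2aS` with `S = E(sup_g ⟨g • X, t₀⟩)`.
Since `E⟨X, t₀⟩ = ‖t₀‖²` and the supremum strictly exceeds `⟨X, t₀⟩` on a set of positive
probability, `S > ‖t₀‖²`; the vertex `a⋆ = S / ‖t₀‖²` of the quadratic then lies beyond `1` and
`F(a⋆ t₀) = F(t₀) - (a⋆ - 1)²‖t₀‖² < F(t₀)`.
-/

open MeasureTheory

theorem ciInf_const_sub {α ι : Type*} [ConditionallyCompleteLinearOrder α] [AddCommGroup α]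
    [IsOrderedAddMonoid α] [Nonempty ι] (c : α) {f : ι → α} (hf : BddAbove (Set.range f)) :
    ⨅ i, (c - f i) = c - ⨆ i, f i :=
  ((OrderIso.subLeft c).map_ciSup hf).symm

theorem integral_lt_integral_of_le_of_measure_setOf_lt_pos {Ω : Type*} [MeasurableSpace Ω]
    {μ : Measure Ω} {f g : Ω → ℝ} (hf : Integrable f μ) (hg : Integrable g μ) (hfg : f ≤ g)
    (hlt : 0 < μ {ω | f ω < g ω}) : ∫ ω, f ω ∂μ < ∫ ω, g ω ∂μ := by
  have hsupport : {ω | f ω < g ω} ⊆ Function.support (g - f) := fun ω hω =>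
    (sub_pos.mpr hω).ne'
  have hpos : 0 < ∫ ω, (g - f) ω ∂μ :=
    (integral_pos_iff_support_of_nonneg (fun ω => sub_nonneg.mpr (hfg ω)) (hg.sub hf)).mpr
      (hlt.trans_le (measure_mono hsupport))
  rw [integral_sub' hg hf] at hpos
  linarith

section IsometricAction

variable {M G : Type*} [NormedAddCommGroup M] [InnerProductSpace ℝ M] [Monoid G] [MulAction G M]

theorem norm_smul_sub_smul_sq (hiso : ∀ (g : G) (x : M), ‖g • x‖ = ‖x‖) (g : G) (x t : M)
    (a : ℝ) :
    ‖g • x - a • t‖ ^ 2 = ‖x‖ ^ 2 + a ^ 2 * ‖t‖ ^ 2 - 2 * a * inner ℝ (g • x) t := by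
  rw [norm_sub_sq_real, real_inner_smul_right, hiso, norm_smul, Real.norm_eq_abs, mul_pow,
    sq_abs]
  ring

theorem iInf_norm_smul_sub_smul_sq (hiso : ∀ (g : G) (x : M), ‖g • x‖ = ‖x‖) (x t : M)
    (hbdd : BddAbove (Set.range fun g : G => inner ℝ (g • x) t)) {a : ℝ} (ha : 0 ≤ a) :
    ⨅ g : G, ‖g • x - a • t‖ ^ 2
      = ‖x‖ ^ 2 + a ^ 2 * ‖t‖ ^ 2 - 2 * a * ⨆ g : G, inner ℝ (g • x) t := by
  have hbdd' : BddAbove (Set.range fun g : G => 2 * a * inner ℝ (g • x) t) := by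
    obtain ⟨B, hB⟩ := hbdd
    refine ⟨2 * a * B, ?_⟩
    rintro _ ⟨g, rfl⟩
    have := hB ⟨g, rfl⟩
    dsimp only at this ⊢
    gcongr
  simp_rw [norm_smul_sub_smul_sq hiso, ciInf_const_sub _ hbdd',
    Real.mul_iSup_of_nonneg (by positivity : (0 : ℝ) ≤ 2 * a)]

variable {Ω : Type*} [MeasurableSpace Ω] {μ : Measure Ω}

theorem integral_iInf_norm_smul_sub_smul_sq [IsProbabilityMeasure μ]
    (hiso : ∀ (g : G) (x : M), ‖g • x‖ = ‖x‖) {X : Ω → M} (t : M)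
    (hX2 : Integrable (fun ω => ‖X ω‖ ^ 2) μ)
    (hbdd : ∀ ω, BddAbove (Set.range fun g : G => inner ℝ (g • X ω) t))
    (hsup : Integrable (fun ω => ⨆ g : G, inner ℝ (g • X ω) t) μ) {a : ℝ} (ha : 0 ≤ a) :
    ∫ ω, ⨅ g : G, ‖g • X ω - a • t‖ ^ 2 ∂μ
      = ∫ ω, ‖X ω‖ ^ 2 ∂μ + a ^ 2 * ‖t‖ ^ 2 - 2 * a * ∫ ω, ⨆ g : G, inner ℝ (g • X ω) t ∂μ := by
  simp_rw [iInf_norm_smul_sub_smul_sq hiso _ t (hbdd _) ha]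
  rw [integral_sub (f := fun ω => ‖X ω‖ ^ 2 + a ^ 2 * ‖t‖ ^ 2)
      (hX2.add (integrable_const _)) (hsup.const_mul _),
    integral_add hX2 (integrable_const _), integral_const_mul (2 * a), integral_const,
    probReal_univ, one_smul]

theorem sq_norm_lt_integral_iSup_inner [CompleteSpace M] {X : Ω → M} {t : M}
    (hXint : Integrable X μ) (hXmean : ∫ ω, X ω ∂μ = t)
    (hbdd : ∀ ω, BddAbove (Set.range fun g : G => inner ℝ (g • X ω) t))
    (hsup : Integrable (fun ω => ⨆ g : G, inner ℝ (g • X ω) t) μ)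
    (hP : 0 < μ {ω | inner ℝ (X ω) t < ⨆ g : G, inner ℝ (g • X ω) t}) :
    ‖t‖ ^ 2 < ∫ ω, ⨆ g : G, inner ℝ (g • X ω) t ∂μ := by
  have hmean : ∫ ω, inner ℝ (X ω) t ∂μ = ‖t‖ ^ 2 :=
    calc ∫ ω, inner ℝ (X ω) t ∂μ = ∫ ω, inner ℝ t (X ω) ∂μ := by simp only [real_inner_comm t]
      _ = ‖t‖ ^ 2 := by rw [integral_inner hXint, hXmean, real_inner_self_eq_norm_sq]
  have hle : (fun ω => inner ℝ (X ω) t) ≤ fun ω => ⨆ g : G, inner ℝ (g • X ω) t := fun ω => by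
    simpa only [one_smul] using le_ciSup (hbdd ω) (1 : G)
  rw [← hmean]
  exact integral_lt_integral_of_le_of_measure_setOf_lt_pos (hXint.inner_const t) hsup hle hP

end IsometricAction

theorem stmt4_general {M G Ω : Type*} [NormedAddCommGroup M] [InnerProductSpace ℝ M]
    [CompleteSpace M] [Group G] [MulAction G M] [MeasurableSpace Ω]
    (μ : Measure Ω) [IsProbabilityMeasure μ]
    (hiso : ∀ (g : G) (x : M), ‖g • x‖ = ‖x‖)
    (X : Ω → M) (t₀ : M) (ht₀ : t₀ ≠ 0)
    (hX2 : Integrable (fun ω => ‖X ω‖ ^ 2) μ)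
    (hXint : Integrable X μ)
    (hXmean : ∫ ω, X ω ∂μ = t₀)
    (hbdd : ∀ ω, BddAbove (Set.range fun g : G => (inner ℝ (g • X ω) t₀ : ℝ)))
    (hsup : Integrable (fun ω => ⨆ g : G, (inner ℝ (g • X ω) t₀ : ℝ)) μ)
    (hP : 0 < μ {ω | (inner ℝ (X ω) t₀ : ℝ) < ⨆ g : G, (inner ℝ (g • X ω) t₀ : ℝ)}) :
    (∃ a : ℝ, 1 < a ∧
      (∫ ω, ⨅ g : G, ‖g • X ω - a • t₀‖ ^ 2 ∂μ)
        < ∫ ω, ⨅ g : G, ‖g • X ω - t₀‖ ^ 2 ∂μ) ∧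
    ¬ (∀ m : M, (∫ ω, ⨅ g : G, ‖g • X ω - t₀‖ ^ 2 ∂μ)
        ≤ ∫ ω, ⨅ g : G, ‖g • X ω - m‖ ^ 2 ∂μ) := by
  have hF (a : ℝ) (ha : 0 ≤ a) := integral_iInf_norm_smul_sub_smul_sq hiso t₀ hX2 hbdd hsup ha
  have hTS := sq_norm_lt_integral_iSup_inner hXint hXmean hbdd hsup hP
  set S := ∫ ω, ⨆ g : G, inner ℝ (g • X ω) t₀ ∂μ
  have hT : 0 < ‖t₀‖ ^ 2 := by positivity
  set a := S / ‖t₀‖ ^ 2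
  have ha : 1 < a := (one_lt_div hT).mpr hTS
  have hSa : S = a * ‖t₀‖ ^ 2 := (div_mul_cancel₀ S hT.ne').symm
  have hlt : ∫ ω, ⨅ g : G, ‖g • X ω - a • t₀‖ ^ 2 ∂μ
      < ∫ ω, ⨅ g : G, ‖g • X ω - t₀‖ ^ 2 ∂μ := by
    have hF1 := hF 1 zero_le_one
    rw [one_smul] at hF1
    rw [hF a (by positivity), hF1, hSa]
    nlinarith [mul_pos (pow_pos (sub_pos.mpr ha) 2) hT]
  exact ⟨⟨a, ha, hlt⟩, fun hmin => (hmin (a • t₀)).not_gt hlt⟩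

/-- General inconsistency theorem: if `P(sup_g ⟨g•X,t₀⟩ > ⟨X,t₀⟩) > 0`, then
there exists `a⋆ > 1` with `F(a⋆ t₀) < F(t₀)`; in particular `[t₀]` is not a
Fréchet mean of `[X]` in the quotient space. -/
theorem stmt4 {M G Ω : Type*} [NormedAddCommGroup M] [InnerProductSpace ℝ M]
    [CompleteSpace M] [Group G] [MulAction G M] [MeasurableSpace Ω]
    (μ : Measure Ω) [IsProbabilityMeasure μ]
    (hlin : ∀ g : G, IsLinearMap ℝ fun x : M => g • x)
    (hiso : ∀ (g : G) (x : M), ‖g • x‖ = ‖x‖)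
    (X : Ω → M) (t₀ : M) (ht₀ : t₀ ≠ 0)
    (hX2 : Integrable (fun ω => ‖X ω‖ ^ 2) μ)
    (hXint : Integrable X μ)
    (hXmean : ∫ ω, X ω ∂μ = t₀)
    (hbdd : ∀ ω, BddAbove (Set.range fun g : G => (inner ℝ (g • X ω) t₀ : ℝ)))
    (hsup : Integrable (fun ω => ⨆ g : G, (inner ℝ (g • X ω) t₀ : ℝ)) μ)
    (hP : 0 < μ {ω | (inner ℝ (X ω) t₀ : ℝ) < ⨆ g : G, (inner ℝ (g • X ω) t₀ : ℝ)}) :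
    (∃ a : ℝ, 1 < a ∧
      (∫ ω, ⨅ g : G, ‖g • X ω - a • t₀‖ ^ 2 ∂μ)
        < ∫ ω, ⨅ g : G, ‖g • X ω - t₀‖ ^ 2 ∂μ) ∧
    ¬ (∀ m : M, (∫ ω, ⨅ g : G, ‖g • X ω - t₀‖ ^ 2 ∂μ)
        ≤ ∫ ω, ⨅ g : G, ‖g • X ω - m‖ ^ 2 ∂μ) :=
  stmt4_general μ hiso X t₀ ht₀ hX2 hXint hXmean hbdd hsup hP
end

section
/- Under the hypotheses of the general inconsistency theorem, the two conditions P(d_Q([t₀],[X]) < ‖t₀ − X‖) > 0 and P(sup_{g∈G} ⟨g·X, t₀⟩ > ⟨X, t₀⟩) > 0 are equivalent. -/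
/-!
For a linear isometry `g`, `‖g • t - x‖² - ‖t - x‖² = 2 (⟪x, t⟫ - ⟪g⁻¹ • x, t⟫)`, so some orbit
point of `t` beats `t` in distance to `x` exactly when some orbit point of `x` beats `x` in
inner product with `t`. The two events are therefore the same set.
-/

open MeasureTheory

section IsometricAction

variable {M G : Type*} [NormedAddCommGroup M] [InnerProductSpace ℝ M] [Group G] [MulAction G M]
  (hlin : ∀ g : G, IsLinearMap ℝ fun x : M => g • x)
  (hiso : ∀ (g : G) (x : M), ‖g • x‖ = ‖x‖)
include hlin hiso

theorem inner_smul_smul_of_isometric (g : G) (a b : M) :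
    (inner ℝ (g • a) (g • b) : ℝ) = inner ℝ a b :=
  LinearIsometry.inner_map_map
    { toLinearMap := IsLinearMap.mk' _ (hlin g), norm_map' := hiso g } a b

theorem norm_smul_sub_lt_iff_inner_lt (g : G) (t x : M) :
    ‖g • t - x‖ < ‖t - x‖ ↔ (inner ℝ x t : ℝ) < inner ℝ (g⁻¹ • x) t := by
  have hmove : (inner ℝ (g • t) x : ℝ) = inner ℝ (g⁻¹ • x) t := by
    rw [real_inner_comm, ← inner_smul_smul_of_isometric hlin hiso g (g⁻¹ • x) t, smul_inv_smul]
  rw [← pow_lt_pow_iff_left₀ (norm_nonneg _) (norm_nonneg _) two_ne_zero,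
    norm_sub_sq_real, norm_sub_sq_real, hiso, hmove, real_inner_comm t x]
  constructor <;> intro h <;> linarith

theorem iInf_norm_smul_sub_lt_iff_lt_iSup_inner (t x : M) :
    (⨅ g : G, ‖g • t - x‖) < ‖t - x‖ ↔ (inner ℝ x t : ℝ) < ⨆ g : G, (inner ℝ (g • x) t : ℝ) := by
  have hbdd : BddAbove (Set.range fun g : G => (inner ℝ (g • x) t : ℝ)) := by
    refine ⟨‖x‖ * ‖t‖, ?_⟩
    rintro _ ⟨g, rfl⟩
    simpa only [hiso] using real_inner_le_norm (g • x) t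
  rw [ciInf_lt_iff ⟨0, by rintro _ ⟨g, rfl⟩; exact norm_nonneg _⟩, lt_ciSup_iff hbdd]
  constructor
  · rintro ⟨g, hg⟩
    exact ⟨g⁻¹, (norm_smul_sub_lt_iff_inner_lt hlin hiso g t x).1 hg⟩
  · rintro ⟨g, hg⟩
    exact ⟨g⁻¹, (norm_smul_sub_lt_iff_inner_lt hlin hiso g⁻¹ t x).2 (by rwa [inv_inv])⟩

end IsometricAction

theorem stmt5_general {M G Ω : Type*} [NormedAddCommGroup M] [InnerProductSpace ℝ M]
    [Group G] [MulAction G M] [MeasurableSpace Ω]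
    (μ : Measure Ω)
    (hlin : ∀ g : G, IsLinearMap ℝ fun x : M => g • x)
    (hiso : ∀ (g : G) (x : M), ‖g • x‖ = ‖x‖)
    (X : Ω → M) (t₀ : M) :
    0 < μ {ω | (⨅ g : G, ‖g • t₀ - X ω‖) < ‖t₀ - X ω‖} ↔
      0 < μ {ω | (inner ℝ (X ω) t₀ : ℝ) < ⨆ g : G, (inner ℝ (g • X ω) t₀ : ℝ)} := by
  simp only [iInf_norm_smul_sub_lt_iff_lt_iSup_inner hlin hiso]

/-- Equivalence of the two inconsistency conditions:
`P(d_Q([t₀],[X]) < ‖t₀ − X‖) > 0` iff `P(sup_g ⟨g•X, t₀⟩ > ⟨X, t₀⟩) > 0`. -/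
theorem stmt5 {M G Ω : Type*} [NormedAddCommGroup M] [InnerProductSpace ℝ M]
    [CompleteSpace M] [Group G] [MulAction G M] [MeasurableSpace Ω]
    (μ : Measure Ω) [IsProbabilityMeasure μ]
    (hlin : ∀ g : G, IsLinearMap ℝ fun x : M => g • x)
    (hiso : ∀ (g : G) (x : M), ‖g • x‖ = ‖x‖)
    (X : Ω → M) (t₀ : M)
    (hX2 : Integrable (fun ω => ‖X ω‖ ^ 2) μ)
    (hXint : Integrable X μ)
    (hXmean : ∫ ω, X ω ∂μ = t₀)
    (hbdd : ∀ ω, BddAbove (Set.range fun g : G => (inner ℝ (g • X ω) t₀ : ℝ))) :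
    0 < μ {ω | (⨅ g : G, ‖g • t₀ - X ω‖) < ‖t₀ - X ω‖} ↔
      0 < μ {ω | (inner ℝ (X ω) t₀ : ℝ) < ⨆ g : G, (inner ℝ (g • X ω) t₀ : ℝ)} :=
  stmt5_general μ hlin hiso X t₀
end

section
/- Let G act linearly and isometrically on a Hilbert space M, and X a random variable with E‖X‖² < ∞ and E(X) = t₀ ≠ 0. Suppose (1) the set [t₀] \ {t₀} is dense in the orbit [t₀], and (2) the support of X contains a ball B(t₀, η) for some η > 0. Then P(d_Q([t₀],[X]) < ‖t₀ − X‖) > 0, hence [t₀] is not a Fréchet mean of [X]. -/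
open MeasureTheory
open scoped RealInnerProductSpace

lemma aux_sq_iInf {ι : Type*} [Nonempty ι] (f : ι → ℝ) (h0 : ∀ i, 0 ≤ f i) :
    (⨅ i, (f i) ^ 2) = (⨅ i, f i) ^ 2 := by
  have hb : BddBelow (Set.range f) := ⟨0, by rintro _ ⟨i, rfl⟩; exact h0 i⟩
  have hb2 : BddBelow (Set.range fun i => (f i) ^ 2) := ⟨0, by rintro _ ⟨i, rfl⟩; positivity⟩
  have ha : 0 ≤ ⨅ i, f i := le_ciInf h0
  have hs0 : 0 ≤ ⨅ i, (f i) ^ 2 := le_ciInf fun i => sq_nonneg _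
  have h1 : (⨅ i, f i) ^ 2 ≤ ⨅ i, (f i) ^ 2 :=
    le_ciInf fun i => by nlinarith [ciInf_le hb i, h0 i]
  have hsq : Real.sqrt (⨅ i, (f i) ^ 2) ≤ ⨅ i, f i := by
    refine le_ciInf fun i => ?_
    calc Real.sqrt (⨅ i, (f i) ^ 2) ≤ Real.sqrt ((f i) ^ 2) :=
          Real.sqrt_le_sqrt (ciInf_le hb2 i)
      _ = f i := by rw [Real.sqrt_sq (h0 i)]
  have h2 : ⨅ i, (f i) ^ 2 ≤ (⨅ i, f i) ^ 2 := by
    nlinarith [Real.sq_sqrt hs0, Real.sqrt_nonneg (⨅ i, (f i) ^ 2)]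
  linarith

lemma aux_affine_iInf {ι : Type*} [Nonempty ι] (u : ι → ℝ) (hb : BddBelow (Set.range u))
    (a b : ℝ) (hbp : 0 ≤ b) : (⨅ i, (a + b * u i)) = a + b * ⨅ i, u i := by
  have mf : Monotone fun t : ℝ => a + b * t := by
    intro s t hst
    simp only
    nlinarith [mul_le_mul_of_nonneg_left hst hbp]
  have cf : ContinuousAt (fun t : ℝ => a + b * t) (⨅ i, u i) :=
    (continuous_const.add (continuous_const.mul continuous_id)).continuousAt
  exact (mf.map_ciInf_of_continuousAt cf hb).symm

/-- If `[t₀] \ {t₀}` is dense in the orbit `[t₀]` and the support of `X`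
contains a ball `B(t₀,η)`, then `P(d_Q([t₀],[X]) < ‖t₀−X‖) > 0` and `[t₀]` is
not a Fréchet mean of `[X]`. -/
theorem stmt6 {M G Ω : Type*} [NormedAddCommGroup M] [InnerProductSpace ℝ M]
    [CompleteSpace M] [Group G] [MulAction G M] [MeasurableSpace Ω]
    (μ : Measure Ω) [IsProbabilityMeasure μ]
    (hlin : ∀ g : G, IsLinearMap ℝ fun x : M => g • x)
    (hiso : ∀ (g : G) (x : M), ‖g • x‖ = ‖x‖)
    (X : Ω → M) (t₀ : M) (ht₀ : t₀ ≠ 0)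
    (hX2 : Integrable (fun ω => ‖X ω‖ ^ 2) μ)
    (hXint : Integrable X μ)
    (hXmean : ∫ ω, X ω ∂μ = t₀)
    (hdense : MulAction.orbit G t₀ ⊆ closure (MulAction.orbit G t₀ \ {t₀}))
    (η : ℝ) (hη : 0 < η)
    (hsupp : ∀ x ∈ Metric.ball t₀ η, ∀ r > 0, 0 < μ {ω | X ω ∈ Metric.ball x r}) :
    0 < μ {ω | (⨅ g : G, ‖g • t₀ - X ω‖) < ‖t₀ - X ω‖} ∧
    ¬ (∀ m : M, (∫ ω, ⨅ g : G, ‖g • X ω - t₀‖ ^ 2 ∂μ)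
        ≤ ∫ ω, ⨅ g : G, ‖g • X ω - m‖ ^ 2 ∂μ) := by
  haveI : Nonempty G := ⟨1⟩
  have hbdd : ∀ x : M, BddBelow (Set.range fun g : G => ‖g • t₀ - x‖) :=
    fun x => ⟨0, by rintro _ ⟨g, rfl⟩; exact norm_nonneg _⟩
  -- Part 1
  obtain ⟨s, hs, hdist⟩ := Metric.mem_closure_iff.mp
    (hdense (MulAction.mem_orbit_self t₀)) η hη
  obtain ⟨hsS, hsne⟩ := hs
  obtain ⟨g₀, hg₀'⟩ := hsS
  have hg₀ : g₀ • t₀ = s := hg₀'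
  have hsnet : s ≠ t₀ := by simpa using hsne
  have hst : 0 < ‖s - t₀‖ := by
    rw [norm_pos_iff]; exact sub_ne_zero.mpr hsnet
  have hstη : ‖s - t₀‖ < η := by
    rw [← dist_eq_norm, dist_comm]; exact hdist
  set x₁ := t₀ + (3 / 4 : ℝ) • (s - t₀) with hx₁def
  have hx₁s : ‖x₁ - s‖ = (1 / 4) * ‖s - t₀‖ := by
    have h : x₁ - s = (-(1 / 4) : ℝ) • (s - t₀) := by rw [hx₁def]; module
    rw [h, norm_smul]; norm_num
  have hx₁t : ‖x₁ - t₀‖ = (3 / 4) * ‖s - t₀‖ := by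
    have h : x₁ - t₀ = ((3 / 4) : ℝ) • (s - t₀) := by rw [hx₁def]; module
    rw [h, norm_smul]; norm_num
  have hx₁ball : x₁ ∈ Metric.ball t₀ η := by
    rw [Metric.mem_ball, dist_eq_norm, hx₁t]; linarith
  have hU : IsOpen {y : M | ‖y - s‖ < ‖y - t₀‖} :=
    isOpen_lt ((continuous_id.sub continuous_const).norm)
      ((continuous_id.sub continuous_const).norm)
  have hx₁U : x₁ ∈ {y : M | ‖y - s‖ < ‖y - t₀‖} := by
    simp only [Set.mem_setOf_eq]; rw [hx₁s, hx₁t]; linarith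
  obtain ⟨r, hr, hball⟩ := Metric.isOpen_iff.mp hU x₁ hx₁U
  have hsub : {ω | X ω ∈ Metric.ball x₁ r}
      ⊆ {ω | (⨅ g : G, ‖g • t₀ - X ω‖) < ‖t₀ - X ω‖} := by
    intro ω hω
    have hXU : ‖X ω - s‖ < ‖X ω - t₀‖ := hball hω
    have h1 : (⨅ g : G, ‖g • t₀ - X ω‖) ≤ ‖g₀ • t₀ - X ω‖ := ciInf_le (hbdd _) g₀
    rw [hg₀] at h1
    have h2 : ‖s - X ω‖ = ‖X ω - s‖ := norm_sub_rev _ _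
    have h3 : ‖X ω - t₀‖ = ‖t₀ - X ω‖ := norm_sub_rev _ _
    simp only [Set.mem_setOf_eq]
    linarith
  have part1 : 0 < μ {ω | (⨅ g : G, ‖g • t₀ - X ω‖) < ‖t₀ - X ω‖} :=
    lt_of_lt_of_le (hsupp x₁ hx₁ball r hr) (measure_mono hsub)
  refine ⟨part1, ?_⟩
  -- Part 2
  set q : M → ℝ := fun x => ⨅ g : G, ‖g • t₀ - x‖ with hqdef
  have hq_le : ∀ (x : M) (g : G), q x ≤ ‖g • t₀ - x‖ := fun x g => ciInf_le (hbdd x) g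
  have hq0 : ∀ x, 0 ≤ q x := fun x => le_ciInf fun g => norm_nonneg _
  have hq_let : ∀ x : M, q x ≤ ‖t₀ - x‖ := fun x => by
    have := hq_le x 1; rwa [one_smul] at this
  have hqcont : Continuous q := by
    have lip : ∀ x y : M, q x ≤ q y + ‖x - y‖ := by
      intro x y
      have h : ∀ g : G, q x - ‖x - y‖ ≤ ‖g • t₀ - y‖ := by
        intro g
        have h1 := hq_le x g
        have h2 : ‖g • t₀ - x‖ ≤ ‖g • t₀ - y‖ + ‖y - x‖ :=
          norm_sub_le_norm_sub_add_norm_sub _ _ _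
        have h3 : ‖y - x‖ = ‖x - y‖ := norm_sub_rev _ _
        linarith
      have := le_ciInf h
      linarith
    refine LipschitzWith.continuous (K := 1) (LipschitzWith.of_dist_le_mul fun x y => ?_)
    simp only [dist_eq_norm, NNReal.coe_one, one_mul, Real.norm_eq_abs]
    rw [abs_sub_le_iff]
    constructor
    · linarith [lip x y]
    · have := lip y x
      rw [norm_sub_rev] at this
      linarith
  have key : ∀ (g : G) (x m : M), ‖g • x - m‖ = ‖g⁻¹ • m - x‖ := by
    intro g x m
    have h2 : g⁻¹ • (g • x - m) = x - g⁻¹ • m := by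
      rw [(hlin g⁻¹).map_sub, inv_smul_smul]
    rw [← hiso g⁻¹ (g • x - m), h2, norm_sub_rev]
  have hswap : ∀ x m : M, (⨅ g : G, ‖g • x - m‖ ^ 2) = ⨅ g : G, ‖g • m - x‖ ^ 2 := by
    intro x m
    rw [iInf, iInf]
    congr 1
    ext v
    simp only [Set.mem_range]
    constructor
    · rintro ⟨g, rfl⟩; exact ⟨g⁻¹, by rw [key g⁻¹ m x, inv_inv]⟩
    · rintro ⟨g, rfl⟩; exact ⟨g⁻¹, by rw [key g⁻¹ x m, inv_inv]⟩
  have hexp : ∀ (y x : M) (c : ℝ), ‖c • y - x‖ ^ 2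
      = (c ^ 2 - c) * ‖y‖ ^ 2 + (1 - c) * ‖x‖ ^ 2 + c * ‖y - x‖ ^ 2 := by
    intro y x c
    have h3 : ‖c • y‖ ^ 2 = c ^ 2 * ‖y‖ ^ 2 := by
      rw [norm_smul, mul_pow, Real.norm_eq_abs, sq_abs]
    rw [norm_sub_sq_real, h3, real_inner_smul_left, norm_sub_sq_real y x]
    ring
  have hP1 : ∀ (x : M) (c : ℝ), 0 ≤ c → (⨅ g : G, ‖g • x - c • t₀‖ ^ 2)
      = (c ^ 2 - c) * ‖t₀‖ ^ 2 + (1 - c) * ‖x‖ ^ 2 + c * (q x) ^ 2 := by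
    intro x c hc
    rw [hswap x (c • t₀)]
    have e1 : ∀ g : G, ‖g • (c • t₀) - x‖ ^ 2
        = ((c ^ 2 - c) * ‖t₀‖ ^ 2 + (1 - c) * ‖x‖ ^ 2) + c * ‖g • t₀ - x‖ ^ 2 := by
      intro g
      rw [(hlin g).map_smul, hexp (g • t₀) x c, hiso g t₀]
      try ring
    simp_rw [e1]
    rw [aux_affine_iInf (fun g : G => ‖g • t₀ - x‖ ^ 2)
      ⟨0, by rintro _ ⟨g, rfl⟩; positivity⟩ _ c hc]
    try rw [aux_sq_iInf (fun g : G => ‖g • t₀ - x‖) (fun g => norm_nonneg _)]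
    try simp only [hqdef]
  have hXm : AEStronglyMeasurable X μ := hXint.1
  have hbound : ∀ x : M, ‖t₀ - x‖ ^ 2 ≤ 2 * ‖t₀‖ ^ 2 + 2 * ‖x‖ ^ 2 := by
    intro x
    have h5 : ‖t₀ - x‖ ≤ ‖t₀‖ + ‖x‖ := norm_sub_le _ _
    have h6 : ‖t₀ - x‖ ^ 2 ≤ (‖t₀‖ + ‖x‖) ^ 2 := pow_le_pow_left₀ (norm_nonneg _) h5 2
    nlinarith [sq_nonneg (‖t₀‖ - ‖x‖)]
  have hmaj : Integrable (fun ω => 2 * ‖t₀‖ ^ 2 + 2 * ‖X ω‖ ^ 2) μ :=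
    (integrable_const _).add (hX2.const_mul 2)
  have hqX2int : Integrable (fun ω => (q (X ω)) ^ 2) μ := by
    refine hmaj.mono' (((hqcont.pow 2).comp_aestronglyMeasurable hXm)) ?_
    refine Filter.Eventually.of_forall fun ω => ?_
    rw [Real.norm_eq_abs, abs_of_nonneg (sq_nonneg _)]
    nlinarith [hq_let (X ω), hq0 (X ω), hbound (X ω), norm_nonneg (t₀ - X ω)]
  have hT2int : Integrable (fun ω => ‖t₀ - X ω‖ ^ 2) μ := by
    refine hmaj.mono'
      ((((continuous_const.sub continuous_id).norm.pow 2).comp_aestronglyMeasurable hXm)) ?_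
    refine Filter.Eventually.of_forall fun ω => ?_
    rw [Real.norm_eq_abs, abs_of_nonneg (sq_nonneg _)]
    exact hbound (X ω)
  have hinner : Integrable (fun ω => ⟪t₀, X ω⟫) μ := hXint.const_inner t₀
  set N := ∫ ω, ‖X ω‖ ^ 2 ∂μ with hNdef
  set Qv := ∫ ω, (q (X ω)) ^ 2 ∂μ with hQdef
  have hmean2 : ∫ ω, ‖t₀ - X ω‖ ^ 2 ∂μ = N - ‖t₀‖ ^ 2 := by
    have e : ∀ ω, ‖t₀ - X ω‖ ^ 2 = (‖t₀‖ ^ 2 - 2 * ⟪t₀, X ω⟫) + ‖X ω‖ ^ 2 := by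
      intro ω; rw [norm_sub_sq_real]
    have i1 : Integrable (fun ω => ‖t₀‖ ^ 2 - 2 * ⟪t₀, X ω⟫) μ :=
      (integrable_const _).sub (hinner.const_mul 2)
    rw [integral_congr_ae (Filter.Eventually.of_forall e)]
    rw [integral_add i1 hX2]
    rw [integral_sub (integrable_const _) (hinner.const_mul 2)]
    rw [integral_const]
    rw [integral_const_mul, integral_inner hXint, hXmean, real_inner_self_eq_norm_sq]
    simp [measure_univ]
    ring
  have hstrict : Qv < N - ‖t₀‖ ^ 2 := by
    rw [← hmean2]
    have hdiffint : Integrable (fun ω => ‖t₀ - X ω‖ ^ 2 - (q (X ω)) ^ 2) μ :=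
      hT2int.sub hqX2int
    have hnn : ∀ ω, 0 ≤ ‖t₀ - X ω‖ ^ 2 - (q (X ω)) ^ 2 := by
      intro ω
      nlinarith [hq_let (X ω), hq0 (X ω)]
    have hne : ∫ ω, (‖t₀ - X ω‖ ^ 2 - (q (X ω)) ^ 2) ∂μ ≠ 0 := by
      intro h0
      have hae := (integral_eq_zero_iff_of_nonneg hnn hdiffint).mp h0
      have hμ0 : μ {ω | ¬ (‖t₀ - X ω‖ ^ 2 - (q (X ω)) ^ 2 = 0)} = 0 := by
        simpa [Filter.EventuallyEq, ae_iff] using hae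
      have hsub2 : {ω | (⨅ g : G, ‖g • t₀ - X ω‖) < ‖t₀ - X ω‖}
          ⊆ {ω | ¬ (‖t₀ - X ω‖ ^ 2 - (q (X ω)) ^ 2 = 0)} := by
        intro ω hω
        simp only [Set.mem_setOf_eq] at hω ⊢
        have hq' : q (X ω) < ‖t₀ - X ω‖ := hω
        have := hq0 (X ω)
        intro heq
        nlinarith
      have := measure_mono_null hsub2 hμ0
      exact part1.ne' this
    have hge : (0 : ℝ) ≤ ∫ ω, (‖t₀ - X ω‖ ^ 2 - (q (X ω)) ^ 2) ∂μ :=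
      integral_nonneg hnn
    have hsubint := integral_sub hT2int hqX2int
    have hpos : (0 : ℝ) < ∫ ω, (‖t₀ - X ω‖ ^ 2 - (q (X ω)) ^ 2) ∂μ :=
      lt_of_le_of_ne hge (Ne.symm hne)
    rw [hsubint] at hpos
    rw [← hQdef] at hpos
    linarith
  set T := ‖t₀‖ ^ 2 with hTdef
  have hT : 0 < T := by
    rw [hTdef]; exact pow_pos (norm_pos_iff.mpr ht₀) 2
  set δ := N - T - Qv with hδdef
  have hδ : 0 < δ := by rw [hδdef]; linarith
  set ε := δ / (2 * T) with hεdef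
  have hε : 0 < ε := div_pos hδ (by linarith)
  have hεT : ε * T = δ / 2 := by
    rw [hεdef]; field_simp
  set c := 1 + ε with hcdef
  have hc : (0 : ℝ) ≤ c := by rw [hcdef]; linarith
  have hIt : (∫ ω, ⨅ g : G, ‖g • X ω - t₀‖ ^ 2 ∂μ) = Qv := by
    have e : ∀ ω, (⨅ g : G, ‖g • X ω - t₀‖ ^ 2) = (q (X ω)) ^ 2 := by
      intro ω
      have h := hP1 (X ω) 1 zero_le_one
      rw [one_smul] at h
      rw [h]; ring
    rw [integral_congr_ae (Filter.Eventually.of_forall e), hQdef]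
  have hIc : (∫ ω, ⨅ g : G, ‖g • X ω - c • t₀‖ ^ 2 ∂μ)
      = (c ^ 2 - c) * T + ((1 - c) * N + c * Qv) := by
    have e : ∀ ω, (⨅ g : G, ‖g • X ω - c • t₀‖ ^ 2)
        = (c ^ 2 - c) * T + ((1 - c) * ‖X ω‖ ^ 2 + c * (q (X ω)) ^ 2) := by
      intro ω
      rw [hP1 (X ω) c hc, hTdef]; ring
    have i2 : Integrable (fun ω => (1 - c) * ‖X ω‖ ^ 2 + c * (q (X ω)) ^ 2) μ :=
      (hX2.const_mul (1 - c)).add (hqX2int.const_mul c)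
    rw [integral_congr_ae (Filter.Eventually.of_forall e)]
    rw [integral_add (integrable_const _) i2]
    rw [integral_add (hX2.const_mul (1 - c)) (hqX2int.const_mul c)]
    rw [integral_const_mul, integral_const_mul, integral_const_mul, integral_const,
      ← hNdef, ← hQdef]
    simp [measure_univ]
  intro hmin
  clear_value N Qv T δ ε c
  have h1 := hmin (c • t₀)
  rw [hIt, hIc] at h1
  have expand : (c ^ 2 - c) * T + ((1 - c) * N + c * Qv) - Qv = ε * (ε * T) - ε * δ := by
    rw [hcdef, hδdef]; ring
  rw [hεT] at expand
  have hm : 0 < ε * δ := mul_pos hε hδ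
  have hfinal : ε * (δ / 2) - ε * δ = -(ε * δ) / 2 := by ring
  linarith only [h1, expand, hm, hfinal]
end

section
/- Let G act linearly and isometrically on a Hilbert space M, and X a random variable with E‖X‖² < ∞ and E(X) = t₀ ≠ 0. Suppose there exists a C¹ curve φ : (−a, a) → M with values in the orbit [t₀], with φ(0) = t₀ and φ'(0) = v ≠ 0, and that the support of X is not contained in the hyperplane v^⊥. Then there exist g ∈ G, y ∈ M and r > 0 with P(X ∈ B(y,r)) > 0 such that ‖g·t₀ − z‖ < ‖t₀ − z‖ for all z ∈ B(y,r); in particular P(d_Q([t₀],[X]) < ‖t₀ − X‖) > 0 and [t₀] is not a Fréchet mean of [X]. -/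
/-!
Write `d_Q([m],[x]) = infDist x (orbit G m)` and `F m = E d_Q([m],[X])²` for the Fréchet function.
Since `⟪y, v⟫ ≠ 0`, some point `g₀ • t₀` of the curve has moved towards a point `y` of the support
of `X`; having the norm of `t₀`, it is strictly closer than `t₀` to every point of a small ball
around `y`, which carries positive mass, so `F t₀ < E‖X - t₀‖²`.  Choose near-optimal
alignments `Z = g(ω) • X` measurably.  Then `E‖Z‖² = E‖X‖²`, while `E‖Z - t₀‖² ≈ F t₀` is
smaller than `E‖X - t₀‖²` by a definite margin; this forces `E Z` away from `t₀ = E X`, and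
`F (E Z) ≤ E‖Z - E Z‖² = E‖Z - t₀‖² - ‖E Z - t₀‖²` drops below `F t₀`.
-/

open MeasureTheory Metric MulAction Filter
open scoped Topology RealInnerProductSpace

theorem sq_ciInf_of_nonneg {ι : Sort*} [Nonempty ι] {f : ι → ℝ} (hf : ∀ i, 0 ≤ f i) :
    (⨅ i, f i) ^ 2 = ⨅ i, f i ^ 2 := by
  have hsqrt : Real.sqrt (⨅ i, f i ^ 2) = ⨅ i, f i := by
    rw [Real.sqrt_monotone.map_ciInf_of_continuousAt Real.continuous_sqrt.continuousAt
      ⟨0, by rintro _ ⟨i, rfl⟩; positivity⟩]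
    simp only [Real.sqrt_sq (hf _)]
  rw [← hsqrt, Real.sq_sqrt (le_ciInf fun i => sq_nonneg (f i))]

theorem HasDerivAt.exists_apply_gt_of_ne_zero {f : ℝ → ℝ} {f' x : ℝ} (hf : HasDerivAt f f' x)
    (hf' : f' ≠ 0) {s : Set ℝ} (hs : s ∈ 𝓝 x) : ∃ t ∈ s, f x < f t := by
  by_contra! h
  exact hf' (IsLocalMax.hasDerivAt_eq_zero (eventually_of_mem hs h) hf)

theorem integral_lt_integral_of_ae_le_of_measure_setOf_lt_pos {α : Type*} [MeasurableSpace α]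
    {μ : Measure α} {f g : α → ℝ} (hf : Integrable f μ) (hg : Integrable g μ) (hle : f ≤ᵐ[μ] g)
    (hlt : 0 < μ {x | f x < g x}) : ∫ x, f x ∂μ < ∫ x, g x ∂μ := by
  rw [← sub_pos, ← integral_sub hg hf, integral_pos_iff_support_of_nonneg_ae
    (hle.mono fun x => sub_nonneg.2) (hg.sub hf)]
  exact hlt.trans_le (measure_mono fun x hx => (sub_pos.2 hx).ne')

section InnerProductSpace

variable {E : Type*} [NormedAddCommGroup E] [InnerProductSpace ℝ E]

theorem norm_sub_lt_norm_sub_iff_inner_lt {p q : E} (h : ‖p‖ = ‖q‖) (z : E) :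
    ‖p - z‖ < ‖q - z‖ ↔ ⟪q, z⟫ < ⟪p, z⟫ := by
  rw [← sq_lt_sq₀ (norm_nonneg _) (norm_nonneg _), norm_sub_sq_real, norm_sub_sq_real, h]
  constructor <;> intro <;> linarith

theorem exists_inner_smul_gt_of_hasDerivAt {G : Type*} [Group G] [MulAction G E] {φ : ℝ → E}
    {t₀ v y : E} (hder : HasDerivAt φ v 0) (hφ0 : φ 0 = t₀)
    (hφorb : ∀ᶠ t in 𝓝 0, φ t ∈ orbit G t₀) (hvy : ⟪v, y⟫ ≠ 0) :
    ∃ g : G, ⟪t₀, y⟫ < ⟪g • t₀, y⟫ := by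
  have hderiv : HasDerivAt (fun t => ⟪φ t, y⟫) ⟪v, y⟫ 0 := by
    simpa using hder.inner ℝ (hasDerivAt_const (0 : ℝ) y)
  obtain ⟨t, ⟨g, hg⟩, ht⟩ := hderiv.exists_apply_gt_of_ne_zero hvy hφorb
  refine ⟨g, ?_⟩
  rwa [show g • t₀ = φ t from hg, ← hφ0]

theorem exists_ball_forall_norm_sub_lt {p q y : E} (h : ‖p‖ = ‖q‖) (hy : ⟪q, y⟫ < ⟪p, y⟫) :
    ∃ r > 0, ∀ z ∈ ball y r, ‖p - z‖ < ‖q - z‖ := by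
  have hopen : IsOpen {z : E | ⟪q, z⟫ < ⟪p, z⟫} :=
    isOpen_lt (continuous_const.inner continuous_id) (continuous_const.inner continuous_id)
  obtain ⟨r, hr, hball⟩ := Metric.isOpen_iff.1 hopen y hy
  exact ⟨r, hr, fun z hz => (norm_sub_lt_norm_sub_iff_inner_lt h z).2 (hball hz)⟩

end InnerProductSpace

section OrbitDistance

variable {G M Ω : Type*} [Group G] [PseudoMetricSpace M] [MulAction G M] [IsIsometricSMul G M]
  [MeasurableSpace Ω]

theorem infDist_orbit_le_dist_smul (g : G) (x m : M) :
    infDist x (orbit G m) ≤ dist (g • x) m :=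
  calc infDist x (orbit G m) ≤ dist x (g⁻¹ • m) := infDist_le_dist_of_mem (mem_orbit m g⁻¹)
    _ = dist (g • x) m := by rw [← dist_smul g, smul_inv_smul]

theorem iInf_dist_smul_eq_infDist_orbit (x m : M) :
    ⨅ g : G, dist (g • x) m = infDist x (orbit G m) := by
  refine le_antisymm (le_of_forall_gt fun r hr => ?_)
    (le_ciInf fun g => infDist_orbit_le_dist_smul g x m)
  obtain ⟨_, ⟨g, rfl⟩, hg⟩ := (infDist_lt_iff (nonempty_orbit m)).1 hr
  calc ⨅ g : G, dist (g • x) m ≤ dist (g⁻¹ • x) m :=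
        ciInf_le ⟨0, by rintro _ ⟨g, rfl⟩; exact dist_nonneg⟩ g⁻¹
    _ = dist x (g • m) := by rw [← dist_smul g, smul_inv_smul]
    _ < r := hg

theorem iInf_dist_smul_sq_eq_infDist_orbit_sq (x m : M) :
    ⨅ g : G, dist (g • x) m ^ 2 = infDist x (orbit G m) ^ 2 := by
  rw [← iInf_dist_smul_eq_infDist_orbit, sq_ciInf_of_nonneg fun g => dist_nonneg]

theorem MeasureTheory.StronglyMeasurable.exists_smul_dist_lt_infDist_orbit_add {T : Ω → M}
    (hT : StronglyMeasurable T) (m : M) {ε : ℝ} (hε : 0 < ε) :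
    ∃ Z : Ω → M, StronglyMeasurable Z ∧
      ∀ ω, (∃ g : G, Z ω = g • T ω) ∧ dist (Z ω) m < infDist (T ω) (orbit G m) + ε := by
  classical
  obtain ⟨c, hc, hTc⟩ := hT.isSeparable_range
  obtain ⟨x, hx⟩ := (hc.insert m).exists_eq_range (Set.insert_nonempty m c)
  have hcover : ∀ ω, ∃ n, dist (T ω) (x n) < ε / 3 := fun ω =>
    mem_closure_range_iff.1 (hx ▸ closure_mono (Set.subset_insert m c) (hTc ⟨ω, rfl⟩))
      (ε / 3) (by positivity)
  have hnear : ∀ n, ∃ g : G, dist (x n) (g • m) < infDist (x n) (orbit G m) + ε / 3 := by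
    intro n
    obtain ⟨_, ⟨g, rfl⟩, hg⟩ := (infDist_lt_iff (nonempty_orbit m)).1
      (lt_add_of_pos_right (infDist (x n) (orbit G m)) (by positivity : 0 < ε / 3))
    exact ⟨g, hg⟩
  choose g hg using hnear
  set N : Ω → ℕ := fun ω => Nat.find (hcover ω)
  have hN : Measurable N := measurable_find hcover fun n =>
    measurableSet_lt ((continuous_id.dist continuous_const).comp_stronglyMeasurable hT)
      stronglyMeasurable_const
  refine ⟨fun ω => (g (N ω))⁻¹ • T ω, ?_, fun ω => ⟨⟨_, rfl⟩, ?_⟩⟩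
  · have hcont : Continuous fun p : ℕ × M => (g p.1)⁻¹ • p.2 :=
      continuous_prod_of_discrete_left.2 fun n => continuous_const_smul (g n)⁻¹
    exact hcont.comp_stronglyMeasurable (hN.stronglyMeasurable.prodMk hT)
  · have hT_near : dist (T ω) (x (N ω)) < ε / 3 := Nat.find_spec (hcover ω)
    have hg_near := hg (N ω)
    have hinfDist := infDist_le_infDist_add_dist (x := x (N ω)) (y := T ω) (s := orbit G m)
    calc dist ((g (N ω))⁻¹ • T ω) m = dist (T ω) (g (N ω) • m) := by
          rw [← dist_smul (g (N ω)), smul_inv_smul]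
      _ ≤ dist (T ω) (x (N ω)) + dist (x (N ω)) (g (N ω) • m) := dist_triangle _ _ _
      _ < infDist (T ω) (orbit G m) + ε := by linarith [dist_comm (T ω) (x (N ω))]

theorem MeasureTheory.AEStronglyMeasurable.exists_smul_dist_lt_infDist_orbit_add
    {μ : Measure Ω} {X : Ω → M} (hX : AEStronglyMeasurable X μ) (m : M) {ε : ℝ} (hε : 0 < ε) :
    ∃ Z : Ω → M, AEStronglyMeasurable Z μ ∧
      ∀ᵐ ω ∂μ, (∃ g : G, Z ω = g • X ω) ∧ dist (Z ω) m < infDist (X ω) (orbit G m) + ε := by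
  obtain ⟨Z, hZ, hZX⟩ :=
    hX.stronglyMeasurable_mk.exists_smul_dist_lt_infDist_orbit_add (G := G) m hε
  exact ⟨Z, hZ.aestronglyMeasurable, hX.ae_eq_mk.mono fun ω hω => hω ▸ hZX ω⟩

end OrbitDistance

section Alignment

variable {G M Ω : Type*} [Group G] [NormedAddCommGroup M] [MulAction G M] [MeasurableSpace Ω]
  {μ : Measure Ω}

theorem MeasureTheory.MemLp.infDist_orbit [IsFiniteMeasure μ] {p : ENNReal} {X : Ω → M}
    (hX : MemLp X p μ) (m : M) : MemLp (fun ω => infDist (X ω) (orbit G m)) p μ := by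
  refine (hX.sub (memLp_const m)).of_le
    ((continuous_infDist_pt _).comp_aestronglyMeasurable hX.1) (ae_of_all _ fun ω => ?_)
  rw [Real.norm_of_nonneg infDist_nonneg, Pi.sub_apply, ← dist_eq_norm]
  exact infDist_le_dist_of_mem (mem_orbit_self m)

theorem integral_infDist_orbit_sq_lt_of_measure_pos [IsFiniteMeasure μ] {X : Ω → M}
    (hX : MemLp X 2 μ) (m : M) (hpos : 0 < μ {ω | infDist (X ω) (orbit G m) < ‖X ω - m‖}) :
    ∫ ω, infDist (X ω) (orbit G m) ^ 2 ∂μ < ∫ ω, ‖X ω - m‖ ^ 2 ∂μ := by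
  refine integral_lt_integral_of_ae_le_of_measure_setOf_lt_pos (hX.infDist_orbit m).integrable_sq
    ((hX.sub (memLp_const m)).integrable_norm_pow two_ne_zero) (ae_of_all _ fun ω => ?_)
    (hpos.trans_le (measure_mono fun ω hω => ?_))
  · dsimp only
    rw [← dist_eq_norm]
    exact pow_le_pow_left₀ infDist_nonneg (infDist_le_dist_of_mem (mem_orbit_self m)) 2
  · exact pow_lt_pow_left₀ hω infDist_nonneg two_ne_zero

theorem integral_infDist_orbit_sq_le_of_ae_smul [IsIsometricSMul G M] [IsFiniteMeasure μ]
    {X Z : Ω → M} (hZ : MemLp Z 2 μ) (hZX : ∀ᵐ ω ∂μ, ∃ g : G, Z ω = g • X ω) (c : M) :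
    ∫ ω, infDist (X ω) (orbit G c) ^ 2 ∂μ ≤ ∫ ω, ‖Z ω - c‖ ^ 2 ∂μ := by
  refine integral_mono_of_nonneg (ae_of_all _ fun ω => sq_nonneg _)
    ((hZ.sub (memLp_const c)).integrable_norm_pow two_ne_zero) (hZX.mono fun ω ⟨g, hg⟩ => ?_)
  dsimp only
  rw [hg, ← dist_eq_norm]
  exact pow_le_pow_left₀ infDist_nonneg (infDist_orbit_le_dist_smul g _ _) 2

theorem exists_memLp_ae_smul_integral_norm_sub_sq_le [IsIsometricSMul G M]
    [IsProbabilityMeasure μ] (hnorm : ∀ (g : G) (x : M), ‖g • x‖ = ‖x‖) {X : Ω → M}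
    (hX : MemLp X 2 μ) (m : M) {ε : ℝ} (hε : 0 < ε) :
    ∃ Z : Ω → M, MemLp Z 2 μ ∧ (∀ᵐ ω ∂μ, ∃ g : G, Z ω = g • X ω) ∧
      ∫ ω, ‖Z ω - m‖ ^ 2 ∂μ ≤ ∫ ω, infDist (X ω) (orbit G m) ^ 2 ∂μ + ε := by
  set d : Ω → ℝ := fun ω => infDist (X ω) (orbit G m)
  have hd : MemLp d 2 μ := hX.infDist_orbit m
  set C := ∫ ω, d ω ∂μ
  have hC : 0 ≤ C := integral_nonneg fun ω => infDist_nonneg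
  set η := min 1 (ε / (2 * C + 1))
  have hη : 0 < η := lt_min one_pos (by positivity)
  have hηC : η * (2 * C + 1) ≤ ε := (le_div_iff₀ (by positivity)).1 (min_le_right _ _)
  obtain ⟨Z, hZm, hZ⟩ := hX.1.exists_smul_dist_lt_infDist_orbit_add (G := G) m hη
  have hZ2 : MemLp Z 2 μ :=
    hX.of_le hZm (hZ.mono fun ω ⟨⟨g, hg⟩, _⟩ => by rw [hg, hnorm])
  have hd1 : Integrable (fun ω => 2 * d ω + 1) μ :=
    ((hd.integrable one_le_two).const_mul 2).add (integrable_const 1)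
  have hbound : Integrable (fun ω => d ω ^ 2 + η * (2 * d ω + 1)) μ :=
    hd.integrable_sq.add (hd1.const_mul η)
  refine ⟨Z, hZ2, hZ.mono fun ω h => h.1, ?_⟩
  calc ∫ ω, ‖Z ω - m‖ ^ 2 ∂μ ≤ ∫ ω, (d ω ^ 2 + η * (2 * d ω + 1)) ∂μ := by
        refine integral_mono_ae ((hZ2.sub (memLp_const m)).integrable_norm_pow two_ne_zero)
          hbound (hZ.mono fun ω h => ?_)
        have hdist : ‖Z ω - m‖ < d ω + η := by rw [← dist_eq_norm]; exact h.2
        have hη1 : η ≤ 1 := min_le_left _ _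
        nlinarith [norm_nonneg (Z ω - m)]
    _ = ∫ ω, d ω ^ 2 ∂μ + η * (2 * C + 1) := by
        rw [integral_add hd.integrable_sq (hd1.const_mul η), integral_const_mul,
          integral_add ((hd.integrable one_le_two).const_mul 2) (integrable_const 1),
          integral_const_mul, integral_const]
        simp [C]
    _ ≤ ∫ ω, d ω ^ 2 ∂μ + ε := by linarith

end Alignment

section FrechetFunction

variable {Ω E : Type*} [MeasurableSpace Ω] {μ : Measure Ω} [IsProbabilityMeasure μ]
  [NormedAddCommGroup E] [InnerProductSpace ℝ E] [CompleteSpace E]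

theorem integral_norm_sub_sq {Z : Ω → E} (hZ : MemLp Z 2 μ) (c : E) :
    ∫ ω, ‖Z ω - c‖ ^ 2 ∂μ = ∫ ω, ‖Z ω‖ ^ 2 ∂μ - 2 * ⟪∫ ω, Z ω ∂μ, c⟫ + ‖c‖ ^ 2 := by
  have hZ1 : Integrable Z μ := hZ.integrable one_le_two
  have hZ2 : Integrable (fun ω => ‖Z ω‖ ^ 2) μ := hZ.integrable_norm_pow two_ne_zero
  have hZc : Integrable (fun ω => 2 * ⟪c, Z ω⟫) μ := (hZ1.const_inner c).const_mul 2
  have hZ2c : Integrable (fun ω => ‖Z ω‖ ^ 2 - 2 * ⟪c, Z ω⟫) μ := hZ2.sub hZc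
  simp_rw [norm_sub_sq_real, real_inner_comm c]
  rw [integral_add hZ2c (integrable_const _), integral_sub hZ2 hZc, integral_const_mul,
    integral_const, ← integral_inner hZ1 c]
  simp

theorem integral_norm_sub_sq_eq_add {Z : Ω → E} (hZ : MemLp Z 2 μ) (c : E) :
    ∫ ω, ‖Z ω - c‖ ^ 2 ∂μ = ∫ ω, ‖Z ω - ∫ ω, Z ω ∂μ‖ ^ 2 ∂μ + ‖(∫ ω, Z ω ∂μ) - c‖ ^ 2 := by
  rw [integral_norm_sub_sq hZ, integral_norm_sub_sq hZ, norm_sub_sq_real,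
    real_inner_self_eq_norm_sq]
  ring

variable {G : Type*} [Group G] [MulAction G E] [IsIsometricSMul G E]

theorem exists_integral_infDist_orbit_sq_lt
    (hnorm : ∀ (g : G) (x : E), ‖g • x‖ = ‖x‖) {X : Ω → E} (hX : MemLp X 2 μ)
    (hgap : ∫ ω, infDist (X ω) (orbit G (∫ ω, X ω ∂μ)) ^ 2 ∂μ
      < ∫ ω, ‖X ω - ∫ ω, X ω ∂μ‖ ^ 2 ∂μ) :
    ∃ m : E, ∫ ω, infDist (X ω) (orbit G m) ^ 2 ∂μ
      < ∫ ω, infDist (X ω) (orbit G (∫ ω, X ω ∂μ)) ^ 2 ∂μ := by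
  set t₀ := ∫ ω, X ω ∂μ
  set F : E → ℝ := fun m => ∫ ω, infDist (X ω) (orbit G m) ^ 2 ∂μ
  set δ := ∫ ω, ‖X ω - t₀‖ ^ 2 ∂μ - F t₀
  have hδ : 0 < δ := sub_pos.2 hgap
  -- `ε ≤ δ / 2` gives `δ / 4 ≤ ⟪E Z - t₀, t₀⟫`, and then `16 ε ‖t₀‖² < δ²` gives `ε < ‖E Z - t₀‖²`.
  obtain ⟨ε, hε, hεδ, hεt₀⟩ : ∃ ε > 0, ε ≤ δ / 2 ∧ 16 * ε * ‖t₀‖ ^ 2 < δ ^ 2 := by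
    refine ⟨min (δ / 2) (δ ^ 2 / (32 * ‖t₀‖ ^ 2 + 1)), by positivity, min_le_left _ _, ?_⟩
    have h := (le_div_iff₀ (by positivity)).1 (min_le_right (δ / 2) (δ ^ 2 / (32 * ‖t₀‖ ^ 2 + 1)))
    nlinarith [lt_min (half_pos hδ) (by positivity : 0 < δ ^ 2 / (32 * ‖t₀‖ ^ 2 + 1))]
  obtain ⟨Z, hZ, hZX, hZε⟩ := exists_memLp_ae_smul_integral_norm_sub_sq_le hnorm hX t₀ hε
  set z := ∫ ω, Z ω ∂μ
  refine ⟨z, ?_⟩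
  have hdescent : F z ≤ ∫ ω, ‖Z ω - t₀‖ ^ 2 ∂μ - ‖z - t₀‖ ^ 2 := by
    have hvar := integral_norm_sub_sq_eq_add hZ t₀
    linarith [integral_infDist_orbit_sq_le_of_ae_smul hZ hZX z]
  have hshift : ∫ ω, ‖Z ω - t₀‖ ^ 2 ∂μ = ∫ ω, ‖X ω - t₀‖ ^ 2 ∂μ - 2 * ⟪z - t₀, t₀⟫ := by
    have hZX2 : ∫ ω, ‖Z ω‖ ^ 2 ∂μ = ∫ ω, ‖X ω‖ ^ 2 ∂μ :=
      integral_congr_ae (hZX.mono fun ω ⟨g, hg⟩ => by simp only [hg, hnorm])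
    rw [integral_norm_sub_sq hZ, integral_norm_sub_sq hX, hZX2, inner_sub_left,
      real_inner_self_eq_norm_sq]
    ring
  have hinner : δ / 4 ≤ ‖z - t₀‖ * ‖t₀‖ := by
    linarith [real_inner_le_norm (z - t₀) t₀]
  have hmove : ε < ‖z - t₀‖ ^ 2 := by
    nlinarith [sq_nonneg ‖t₀‖, mul_self_le_mul_self (by positivity) hinner]
  linarith

end FrechetFunction

theorem stmt7_general {M G Ω : Type*} [NormedAddCommGroup M] [InnerProductSpace ℝ M]
    [CompleteSpace M] [Group G] [MulAction G M] [MeasurableSpace Ω]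
    (μ : Measure Ω) [IsProbabilityMeasure μ]
    (hlin : ∀ g : G, IsLinearMap ℝ fun x : M => g • x)
    (hiso : ∀ (g : G) (x : M), ‖g • x‖ = ‖x‖)
    (X : Ω → M) (t₀ : M)
    (hX2 : Integrable (fun ω => ‖X ω‖ ^ 2) μ)
    (hXint : Integrable X μ)
    (hXmean : ∫ ω, X ω ∂μ = t₀)
    (a : ℝ) (ha : 0 < a) (φ : ℝ → M) (v : M)
    (hφorb : ∀ x ∈ Set.Ioo (-a) a, φ x ∈ MulAction.orbit G t₀)
    (hφ0 : φ 0 = t₀)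
    (hder : HasDerivAt φ v 0)
    (hsupp : ∃ y : M, (∀ r > 0, 0 < μ {ω | X ω ∈ Metric.ball y r}) ∧
      (inner ℝ y v : ℝ) ≠ 0) :
    (∃ (g : G) (y : M) (r : ℝ), 0 < r ∧ 0 < μ {ω | X ω ∈ Metric.ball y r} ∧
      ∀ z ∈ Metric.ball y r, ‖g • t₀ - z‖ < ‖t₀ - z‖) ∧
    0 < μ {ω | (⨅ g : G, ‖g • t₀ - X ω‖) < ‖t₀ - X ω‖} ∧
    ¬ (∀ m : M, (∫ ω, ⨅ g : G, ‖g • X ω - t₀‖ ^ 2 ∂μ)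
        ≤ ∫ ω, ⨅ g : G, ‖g • X ω - m‖ ^ 2 ∂μ) := by
  have : IsIsometricSMul G M := ⟨fun g => Isometry.of_dist_eq fun x y => by
    rw [dist_eq_norm, dist_eq_norm, ← (hlin g).map_sub, hiso]⟩
  obtain ⟨y, hy, hyv⟩ := hsupp
  obtain ⟨g₀, hg₀⟩ := exists_inner_smul_gt_of_hasDerivAt (G := G) hder hφ0
    (eventually_of_mem (Ioo_mem_nhds (neg_neg_of_pos ha) ha) hφorb) (by rwa [real_inner_comm])
  obtain ⟨r, hr, hball⟩ := exists_ball_forall_norm_sub_lt (hiso g₀ t₀) hg₀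
  have hμball := hy r hr
  refine ⟨⟨g₀, y, r, hr, hμball, hball⟩, hμball.trans_le (measure_mono fun ω hω => ?_), ?_⟩
  · have hbdd : BddBelow (Set.range fun g : G => ‖g • t₀ - X ω‖) :=
      ⟨0, by rintro _ ⟨g, rfl⟩; exact norm_nonneg _⟩
    exact (ciInf_le hbdd g₀).trans_lt (hball _ hω)
  have hX : MemLp X 2 μ := (memLp_two_iff_integrable_sq_norm hXint.1).2 hX2
  have hgap := integral_infDist_orbit_sq_lt_of_measure_pos hX t₀
    (hμball.trans_le (measure_mono fun ω hω =>
      (infDist_le_dist_of_mem (mem_orbit t₀ g₀)).trans_lt (by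
        rw [dist_comm, dist_eq_norm, norm_sub_rev (X ω)]; exact hball _ hω)))
  subst hXmean
  obtain ⟨m, hm⟩ := exists_integral_infDist_orbit_sq_lt hiso hX hgap
  simp only [← dist_eq_norm, iInf_dist_smul_sq_eq_infDist_orbit_sq]
  exact fun h => (h m).not_gt hm

/-- If the orbit `[t₀]` contains a C¹ curve `φ` through `t₀` with nonzero
velocity `v`, and the support of `X` is not contained in `v^⊥`, then there are
`g, y, r` with `P(X ∈ B(y,r)) > 0` and `‖g•t₀ − z‖ < ‖t₀ − z‖` on `B(y,r)`;
in particular `P(d_Q([t₀],[X]) < ‖t₀−X‖) > 0` and `[t₀]` is not a Fréchet mean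
of `[X]`. -/
theorem stmt7 {M G Ω : Type*} [NormedAddCommGroup M] [InnerProductSpace ℝ M]
    [CompleteSpace M] [Group G] [MulAction G M] [MeasurableSpace Ω]
    (μ : Measure Ω) [IsProbabilityMeasure μ]
    (hlin : ∀ g : G, IsLinearMap ℝ fun x : M => g • x)
    (hiso : ∀ (g : G) (x : M), ‖g • x‖ = ‖x‖)
    (X : Ω → M) (t₀ : M) (ht₀ : t₀ ≠ 0)
    (hX2 : Integrable (fun ω => ‖X ω‖ ^ 2) μ)
    (hXint : Integrable X μ)
    (hXmean : ∫ ω, X ω ∂μ = t₀)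
    (a : ℝ) (ha : 0 < a) (φ : ℝ → M) (v : M)
    (hφorb : ∀ x ∈ Set.Ioo (-a) a, φ x ∈ MulAction.orbit G t₀)
    (hC1 : ContDiffOn ℝ 1 φ (Set.Ioo (-a) a))
    (hφ0 : φ 0 = t₀)
    (hder : HasDerivAt φ v 0) (hv : v ≠ 0)
    (hsupp : ∃ y : M, (∀ r > 0, 0 < μ {ω | X ω ∈ Metric.ball y r}) ∧
      (inner ℝ y v : ℝ) ≠ 0) :
    (∃ (g : G) (y : M) (r : ℝ), 0 < r ∧ 0 < μ {ω | X ω ∈ Metric.ball y r} ∧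
      ∀ z ∈ Metric.ball y r, ‖g • t₀ - z‖ < ‖t₀ - z‖) ∧
    0 < μ {ω | (⨅ g : G, ‖g • t₀ - X ω‖) < ‖t₀ - X ω‖} ∧
    ¬ (∀ m : M, (∫ ω, ⨅ g : G, ‖g • X ω - t₀‖ ^ 2 ∂μ)
        ≤ ∫ ω, ⨅ g : G, ‖g • X ω - m‖ ^ 2 ∂μ) :=
  stmt7_general μ hlin hiso X t₀ hX2 hXint hXmean a ha φ v hφorb hφ0 hder hsupp
end

section
/- With X = t₀ + σε, E(ε) = 0, E‖ε‖² = 1, t₀ not a fixed point, and ν = E(sup_{g∈G} ⟨g·ε, t₀/‖t₀‖⟩), one has ν ∈ (0, 1] whenever P(sup_g⟨g·X,t₀⟩ > ⟨X,t₀⟩) > 0; moreover σν − 2‖t₀‖ ≤ ‖t₀‖(a⋆ − 1) ≤ σν, where a⋆ = E(sup_g ⟨g·X, t₀⟩)/‖t₀‖². -/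
/-!
With `u = ‖t₀‖⁻¹ • t₀`, linearity of the action gives
`⟪g • X, t₀⟫ = ⟪g • t₀, t₀⟫ + σ ‖t₀‖ ⟪g • ε, u⟫` and `|⟪g • t₀, t₀⟫| ≤ ‖t₀‖²`, so the two orbit
suprema `sup_g ⟪g • X, t₀⟫` and `σ ‖t₀‖ sup_g ⟪g • ε, u⟫` differ by at most `‖t₀‖²` pointwise;
integrating gives both bounds on `a⋆`. By Cauchy–Schwarz `sup_g ⟪g • ε, u⟫ ≤ ‖ε‖`, and
`E‖ε‖ ≤ (E‖ε‖²)^(1/2) = 1`, so `ν ≤ 1`. Finally the supremum dominates its `g = 1` term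
`⟪ε, u⟫`, which has mean zero, strictly wherever `sup_g ⟪g • X, t₀⟫ > ⟪X, t₀⟫`; this event has
positive probability, so `ν > 0`.
-/

open MeasureTheory
open scoped InnerProductSpace
open Set

section OrbitSupremum

variable {M G : Type*} [NormedAddCommGroup M] [InnerProductSpace ℝ M] [Monoid G] [MulAction G M]

theorem abs_ciSup_sub_ciSup_le {ι : Type*} [Nonempty ι] {f h : ι → ℝ}
    (hf : BddAbove (range f)) (hh : BddAbove (range h)) {c : ℝ}
    (hfh : ∀ i, |f i - h i| ≤ c) : |(⨆ i, f i) - ⨆ i, h i| ≤ c := by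
  rw [abs_sub_le_iff]
  constructor
  · rw [sub_le_iff_le_add]
    exact ciSup_le fun i =>
      (sub_le_iff_le_add.1 (abs_sub_le_iff.1 (hfh i)).1).trans (by gcongr; exact le_ciSup hh i)
  · rw [sub_le_iff_le_add]
    exact ciSup_le fun i =>
      (sub_le_iff_le_add.1 (abs_sub_le_iff.1 (hfh i)).2).trans (by gcongr; exact le_ciSup hf i)

theorem inner_smul_left_le_norm_mul_norm (hiso : ∀ (g : G) (x : M), ‖g • x‖ = ‖x‖)
    (g : G) (x y : M) : ⟪g • x, y⟫_ℝ ≤ ‖x‖ * ‖y‖ :=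
  hiso g x ▸ real_inner_le_norm _ _

theorem bddAbove_range_inner_smul_left (hiso : ∀ (g : G) (x : M), ‖g • x‖ = ‖x‖) (x y : M) :
    BddAbove (range fun g : G => ⟪g • x, y⟫_ℝ) :=
  ⟨‖x‖ * ‖y‖, forall_mem_range.2 fun g => inner_smul_left_le_norm_mul_norm hiso g x y⟩

theorem iSup_inner_smul_left_le (hiso : ∀ (g : G) (x : M), ‖g • x‖ = ‖x‖) (x y : M) :
    ⨆ g : G, ⟪g • x, y⟫_ℝ ≤ ‖x‖ * ‖y‖ :=
  ciSup_le fun g => inner_smul_left_le_norm_mul_norm hiso g x y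

theorem inner_le_iSup_inner_smul_left (hiso : ∀ (g : G) (x : M), ‖g • x‖ = ‖x‖) (x y : M) :
    ⟪x, y⟫_ℝ ≤ ⨆ g : G, ⟪g • x, y⟫_ℝ := by
  simpa using le_ciSup (bddAbove_range_inner_smul_left hiso x y) 1

theorem iSup_inner_smul_left_smul_right {r : ℝ} (hr : 0 ≤ r) (x y : M) :
    ⨆ g : G, ⟪g • x, r • y⟫_ℝ = r * ⨆ g : G, ⟪g • x, y⟫_ℝ := by
  simp only [real_inner_smul_right, Real.mul_iSup_of_nonneg hr]

theorem inner_smul_add_smul_left (hlin : ∀ g : G, IsLinearMap ℝ fun x : M => g • x)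
    (g : G) (t e y : M) (σ : ℝ) : ⟪g • (t + σ • e), y⟫_ℝ = ⟪g • t, y⟫_ℝ + σ * ⟪g • e, y⟫_ℝ := by
  rw [(hlin g).map_add, (hlin g).map_smul, inner_add_left, real_inner_smul_left]

theorem abs_inner_smul_left_self_le (hiso : ∀ (g : G) (x : M), ‖g • x‖ = ‖x‖) (g : G) (t : M) :
    |⟪g • t, t⟫_ℝ| ≤ ‖t‖ ^ 2 := by
  simpa [hiso, sq] using abs_real_inner_le_norm (g • t) t

theorem abs_iSup_inner_smul_add_sub_le (hlin : ∀ g : G, IsLinearMap ℝ fun x : M => g • x)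
    (hiso : ∀ (g : G) (x : M), ‖g • x‖ = ‖x‖) (t e : M) {σ : ℝ} (hσ : 0 ≤ σ) :
    |(⨆ g : G, ⟪g • (t + σ • e), t⟫_ℝ) - σ * ⨆ g : G, ⟪g • e, t⟫_ℝ| ≤ ‖t‖ ^ 2 := by
  rw [← iSup_inner_smul_left_smul_right hσ]
  refine abs_ciSup_sub_ciSup_le (bddAbove_range_inner_smul_left hiso _ _)
    (bddAbove_range_inner_smul_left hiso _ _) fun g => ?_
  rw [inner_smul_add_smul_left hlin, real_inner_smul_right, add_sub_cancel_right]
  exact abs_inner_smul_left_self_le hiso g t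

theorem inner_lt_iSup_inner_smul_left_of_add (hlin : ∀ g : G, IsLinearMap ℝ fun x : M => g • x)
    (hiso : ∀ (g : G) (x : M), ‖g • x‖ = ‖x‖) {t e : M} {σ : ℝ} (hσ : 0 ≤ σ)
    (h : ⟪t + σ • e, t⟫_ℝ < ⨆ g : G, ⟪g • (t + σ • e), t⟫_ℝ) :
    ⟪e, t⟫_ℝ < ⨆ g : G, ⟪g • e, t⟫_ℝ := by
  obtain ⟨g, hg⟩ := exists_lt_of_lt_ciSup h
  have hlhs : ⟪t + σ • e, t⟫_ℝ = ‖t‖ ^ 2 + σ * ⟪e, t⟫_ℝ := by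
    simpa [real_inner_self_eq_norm_sq] using inner_smul_add_smul_left hlin (1 : G) t e t σ
  rw [hlhs, inner_smul_add_smul_left hlin] at hg
  have hσe : σ * ⟪e, t⟫_ℝ < σ * ⟪g • e, t⟫_ℝ := by
    linarith [(abs_le.1 (abs_inner_smul_left_self_le hiso g t)).2]
  exact (lt_of_mul_lt_mul_left hσe hσ).trans_le
    (le_ciSup (bddAbove_range_inner_smul_left hiso e t) g)

end OrbitSupremum

section Integrals

variable {Ω : Type*} [MeasurableSpace Ω] {μ : Measure Ω}

theorem abs_integral_sub_integral_le [IsProbabilityMeasure μ] {f h : Ω → ℝ}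
    (hf : Integrable f μ) (hh : Integrable h μ) {c : ℝ} (hfh : ∀ ω, |f ω - h ω| ≤ c) :
    |(∫ ω, f ω ∂μ) - ∫ ω, h ω ∂μ| ≤ c := by
  rw [← integral_sub hf hh]
  simpa using norm_integral_le_of_norm_le_const (μ := μ) (f := fun ω => f ω - h ω)
    (ae_of_all _ fun ω => (Real.norm_eq_abs _).trans_le (hfh ω))

theorem integral_lt_integral_of_le_of_measure_pos {f h : Ω → ℝ}
    (hf : Integrable f μ) (hh : Integrable h μ) (hfh : f ≤ h)
    (hpos : 0 < μ {ω | f ω < h ω}) : ∫ ω, f ω ∂μ < ∫ ω, h ω ∂μ := by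
  rw [← sub_pos, ← integral_sub hh hf, integral_pos_iff_support_of_nonneg
    (fun ω => sub_nonneg.2 (hfh ω)) (hh.sub hf)]
  refine hpos.trans_le (measure_mono fun ω hω => ?_)
  exact sub_ne_zero.2 (ne_of_gt hω)

theorem integral_le_one_of_integral_sq_eq_one [IsProbabilityMeasure μ] {f : Ω → ℝ}
    (hf : Integrable f μ) (hf2 : Integrable (fun ω => f ω ^ 2) μ)
    (h1 : ∫ ω, f ω ^ 2 ∂μ = 1) : ∫ ω, f ω ∂μ ≤ 1 := by
  have hvar := ProbabilityTheory.variance_nonneg f μ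
  rw [ProbabilityTheory.variance_eq_sub ((memLp_two_iff_integrable_sq hf.1).2 hf2)] at hvar
  simp only [Pi.pow_apply, h1, sub_nonneg] at hvar
  exact (abs_le_of_sq_le_sq' (by simpa using hvar) zero_le_one).2

end Integrals

theorem stmt11_general {M G Ω : Type*} [NormedAddCommGroup M] [InnerProductSpace ℝ M]
    [CompleteSpace M] [Group G] [MulAction G M] [MeasurableSpace Ω]
    (μ : Measure Ω) [IsProbabilityMeasure μ]
    (hlin : ∀ g : G, IsLinearMap ℝ fun x : M => g • x)
    (hiso : ∀ (g : G) (x : M), ‖g • x‖ = ‖x‖)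
    (ε : Ω → M) (t₀ : M) (ht₀ : t₀ ≠ 0) (σ : ℝ) (hσ : 0 < σ)
    (hεint : Integrable ε μ) (hεmean : ∫ ω, ε ω ∂μ = 0)
    (hε2 : (∫ ω, ‖ε ω‖ ^ 2 ∂μ) = 1)
    (hε2int : Integrable (fun ω => ‖ε ω‖ ^ 2) μ)
    (X : Ω → M) (hX : ∀ ω, X ω = t₀ + σ • ε ω)
    (hsupX : Integrable (fun ω => ⨆ g : G, (inner ℝ (g • X ω) t₀ : ℝ)) μ)
    (hsupε : Integrable
      (fun ω => ⨆ g : G, (inner ℝ (g • ε ω) (‖t₀‖⁻¹ • t₀) : ℝ)) μ)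
    (hP : 0 < μ {ω | (inner ℝ (X ω) t₀ : ℝ) < ⨆ g : G, (inner ℝ (g • X ω) t₀ : ℝ)}) :
    (0 < ∫ ω, ⨆ g : G, (inner ℝ (g • ε ω) (‖t₀‖⁻¹ • t₀) : ℝ) ∂μ) ∧
    (∫ ω, ⨆ g : G, (inner ℝ (g • ε ω) (‖t₀‖⁻¹ • t₀) : ℝ) ∂μ) ≤ 1 ∧
    σ * (∫ ω, ⨆ g : G, (inner ℝ (g • ε ω) (‖t₀‖⁻¹ • t₀) : ℝ) ∂μ) - 2 * ‖t₀‖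
      ≤ ‖t₀‖ * ((∫ ω, ⨆ g : G, (inner ℝ (g • X ω) t₀ : ℝ) ∂μ) / ‖t₀‖ ^ 2 - 1) ∧
    ‖t₀‖ * ((∫ ω, ⨆ g : G, (inner ℝ (g • X ω) t₀ : ℝ) ∂μ) / ‖t₀‖ ^ 2 - 1)
      ≤ σ * ∫ ω, ⨆ g : G, (inner ℝ (g • ε ω) (‖t₀‖⁻¹ • t₀) : ℝ) ∂μ := by
  have hc : 0 < ‖t₀‖ := norm_pos_iff.2 ht₀
  set u : M := ‖t₀‖⁻¹ • t₀
  have hF : ∀ ω, ⨆ g : G, ⟪g • ε ω, u⟫_ℝ = ‖t₀‖⁻¹ * ⨆ g : G, ⟪g • ε ω, t₀⟫_ℝ := fun ω =>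
    iSup_inner_smul_left_smul_right (inv_nonneg.2 hc.le) _ _
  have hA : |(∫ ω, ⨆ g : G, ⟪g • X ω, t₀⟫_ℝ ∂μ)
      - σ * ‖t₀‖ * ∫ ω, ⨆ g : G, ⟪g • ε ω, u⟫_ℝ ∂μ| ≤ ‖t₀‖ ^ 2 := by
    rw [← integral_const_mul]
    refine abs_integral_sub_integral_le hsupX (hsupε.const_mul _) fun ω => ?_
    rw [hF, mul_assoc, mul_inv_cancel_left₀ hc.ne', hX]
    exact abs_iSup_inner_smul_add_sub_le hlin hiso t₀ (ε ω) hσ.le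
  have hν1 : ∫ ω, ⨆ g : G, ⟪g • ε ω, u⟫_ℝ ∂μ ≤ 1 := by
    refine (integral_mono hsupε hεint.norm fun ω => ?_).trans
      (integral_le_one_of_integral_sq_eq_one hεint.norm hε2int hε2)
    have hu : ‖u‖ = 1 := norm_smul_inv_norm ht₀
    simpa only [hu, mul_one] using iSup_inner_smul_left_le hiso (ε ω) u
  have hν0 : 0 < ∫ ω, ⨆ g : G, ⟪g • ε ω, u⟫_ℝ ∂μ := by
    have hmean : ∫ ω, ⟪ε ω, u⟫_ℝ ∂μ = 0 := by
      simp_rw [real_inner_comm u]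
      rw [integral_inner hεint, hεmean, inner_zero_right]
    rw [← hmean]
    refine integral_lt_integral_of_le_of_measure_pos (hεint.inner_const u) hsupε
      (fun ω => inner_le_iSup_inner_smul_left hiso (ε ω) u) (hP.trans_le (measure_mono ?_))
    intro ω hω
    rw [mem_ofPred_eq, hX] at hω
    have hlt := inner_lt_iSup_inner_smul_left_of_add hlin hiso hσ.le hω
    change ⟪ε ω, u⟫_ℝ < ⨆ g : G, ⟪g • ε ω, u⟫_ℝ
    rw [hF, real_inner_smul_right]
    exact mul_lt_mul_of_pos_left hlt (inv_pos.2 hc)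
  set a := ∫ ω, ⨆ g : G, ⟪g • X ω, t₀⟫_ℝ ∂μ
  have hrw : ‖t₀‖ * (a / ‖t₀‖ ^ 2 - 1) = a / ‖t₀‖ - ‖t₀‖ := by field_simp
  obtain ⟨hAlow, hAup⟩ := abs_le.1 hA
  refine ⟨hν0, hν1, ?_, ?_⟩ <;> rw [hrw]
  · rw [le_sub_iff_add_le, le_div_iff₀ hc]
    nlinarith
  · rw [sub_le_iff_le_add, div_le_iff₀ hc]
    nlinarith

/-- With `X = t₀ + σε`, `ν = E(sup_g ⟨g•ε, t₀/‖t₀‖⟩)` satisfies `ν ∈ (0,1]`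
whenever `P(sup_g ⟨g•X,t₀⟩ > ⟨X,t₀⟩) > 0`, and
`σν − 2‖t₀‖ ≤ ‖t₀‖(a⋆ − 1) ≤ σν`. -/
theorem stmt11 {M G Ω : Type*} [NormedAddCommGroup M] [InnerProductSpace ℝ M]
    [CompleteSpace M] [Group G] [MulAction G M] [MeasurableSpace Ω]
    (μ : Measure Ω) [IsProbabilityMeasure μ]
    (hlin : ∀ g : G, IsLinearMap ℝ fun x : M => g • x)
    (hiso : ∀ (g : G) (x : M), ‖g • x‖ = ‖x‖)
    (ε : Ω → M) (t₀ : M) (ht₀ : t₀ ≠ 0) (σ : ℝ) (hσ : 0 < σ)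
    (hεint : Integrable ε μ) (hεmean : ∫ ω, ε ω ∂μ = 0)
    (hε2 : (∫ ω, ‖ε ω‖ ^ 2 ∂μ) = 1)
    (hε2int : Integrable (fun ω => ‖ε ω‖ ^ 2) μ)
    (X : Ω → M) (hX : ∀ ω, X ω = t₀ + σ • ε ω)
    (hfix : ∃ g : G, g • t₀ ≠ t₀)
    (hbddX : ∀ ω, BddAbove (Set.range fun g : G => (inner ℝ (g • X ω) t₀ : ℝ)))
    (hsupX : Integrable (fun ω => ⨆ g : G, (inner ℝ (g • X ω) t₀ : ℝ)) μ)
    (hbddε : ∀ ω, BddAbove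
      (Set.range fun g : G => (inner ℝ (g • ε ω) (‖t₀‖⁻¹ • t₀) : ℝ)))
    (hsupε : Integrable
      (fun ω => ⨆ g : G, (inner ℝ (g • ε ω) (‖t₀‖⁻¹ • t₀) : ℝ)) μ)
    (hP : 0 < μ {ω | (inner ℝ (X ω) t₀ : ℝ) < ⨆ g : G, (inner ℝ (g • X ω) t₀ : ℝ)}) :
    (0 < ∫ ω, ⨆ g : G, (inner ℝ (g • ε ω) (‖t₀‖⁻¹ • t₀) : ℝ) ∂μ) ∧
    (∫ ω, ⨆ g : G, (inner ℝ (g • ε ω) (‖t₀‖⁻¹ • t₀) : ℝ) ∂μ) ≤ 1 ∧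
    σ * (∫ ω, ⨆ g : G, (inner ℝ (g • ε ω) (‖t₀‖⁻¹ • t₀) : ℝ) ∂μ) - 2 * ‖t₀‖
      ≤ ‖t₀‖ * ((∫ ω, ⨆ g : G, (inner ℝ (g • X ω) t₀ : ℝ) ∂μ) / ‖t₀‖ ^ 2 - 1) ∧
    ‖t₀‖ * ((∫ ω, ⨆ g : G, (inner ℝ (g • X ω) t₀ : ℝ) ∂μ) / ‖t₀‖ ^ 2 - 1)
      ≤ σ * ∫ ω, ⨆ g : G, (inner ℝ (g • ε ω) (‖t₀‖⁻¹ • t₀) : ℝ) ∂μ :=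
  stmt11_general μ hlin hiso ε t₀ ht₀ σ hσ hεint hεmean hε2 hε2int X hX hsupX hsupε hP
end

section
/- Let G act linearly and isometrically on a Hilbert space M, X = t₀ + σε with E(ε) = 0, E‖ε‖² = 1, and let p be the orthogonal projection onto the closed subspace Fix(M) of fixed points. Then ν := E(sup_{g∈G} ⟨g·ε, t₀⟩)/‖t₀‖ satisfies ν ≤ dist(t₀/‖t₀‖, Fix(M)) · E‖ε‖, where dist(x, Fix(M)) = ‖x − p(x)‖. -/
/-!
For a fixed vector `f`, isometry and linearity give `⟪g • x, f⟫ = ⟪x, f⟫`, so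
`⟪g • ε, t₀⟫ = ⟪g • ε, t₀ - f⟫ + ⟪ε, f⟫ ≤ ‖ε‖ ‖t₀ - f‖ + ⟪ε, f⟫` uniformly in `g`.
Taking expectations kills `⟪ε, f⟫` because `E ε = 0`; optimizing over the fixed vectors
`f = ‖t₀‖ • h` yields the distance from `t₀ / ‖t₀‖` to `Fix(M)`.
-/

open MeasureTheory MulAction

theorem Metric.le_infDist_mul {α : Type*} [PseudoMetricSpace α] {x : α} {s : Set α}
    (hs : s.Nonempty) {a c : ℝ} (hc : 0 ≤ c) (h : ∀ y ∈ s, a ≤ dist x y * c) :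
    a ≤ infDist x s * c := by
  rcases hc.eq_or_lt with rfl | hc
  · obtain ⟨y, hy⟩ := hs
    simpa using h y hy
  · rw [← div_le_iff₀ hc, le_infDist hs]
    exact fun y hy => (div_le_iff₀ hc).2 (h y hy)

section IsometricAction

variable {M G : Type*} [NormedAddCommGroup M] [InnerProductSpace ℝ M] [Group G] [MulAction G M]
  (hlin : ∀ g : G, IsLinearMap ℝ fun x : M => g • x) (hiso : ∀ (g : G) (x : M), ‖g • x‖ = ‖x‖)

include hlin in
theorem smul_mem_fixedPoints_of_isLinearMap {f : M} (hf : f ∈ fixedPoints G M) (r : ℝ) :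
    r • f ∈ fixedPoints G M := fun g => by
  rw [(hlin g).map_smul, hf g]

include hlin hiso in
theorem inner_smul_left_of_mem_fixedPoints (g : G) (x : M) {f : M} (hf : f ∈ fixedPoints G M) :
    inner ℝ (g • x) f = inner ℝ x f := by
  conv_lhs => rw [← hf g]
  exact LinearIsometry.inner_map_map ⟨IsLinearMap.mk' _ (hlin g), hiso g⟩ x f

include hlin hiso in
theorem iSup_inner_smul_le (x t : M) {f : M} (hf : f ∈ fixedPoints G M) :
    ⨆ g : G, inner ℝ (g • x) t ≤ ‖x‖ * ‖t - f‖ + inner ℝ x f :=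
  ciSup_le fun g => calc
    inner ℝ (g • x) t = inner ℝ (g • x) (t - f) + inner ℝ x f := by
      rw [inner_sub_right, inner_smul_left_of_mem_fixedPoints hlin hiso g x hf, sub_add_cancel]
    _ ≤ ‖g • x‖ * ‖t - f‖ + inner ℝ x f := by gcongr; exact real_inner_le_norm _ _
    _ = ‖x‖ * ‖t - f‖ + inner ℝ x f := by rw [hiso]

include hlin hiso in
theorem integral_iSup_inner_smul_le [CompleteSpace M] {Ω : Type*} [MeasurableSpace Ω]
    {μ : Measure Ω} {ε : Ω → M} (hεint : Integrable ε μ) (hεmean : ∫ ω, ε ω ∂μ = 0) (t : M)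
    (hsup : Integrable (fun ω => ⨆ g : G, inner ℝ (g • ε ω) t) μ)
    {f : M} (hf : f ∈ fixedPoints G M) :
    ∫ ω, ⨆ g : G, inner ℝ (g • ε ω) t ∂μ ≤ ‖t - f‖ * ∫ ω, ‖ε ω‖ ∂μ := by
  have hε1 : Integrable (fun ω => ‖ε ω‖) μ := hεint.norm
  have hinner : Integrable (fun ω => inner ℝ (ε ω) f) μ := hεint.inner_const f
  have hmean : ∫ ω, inner ℝ (ε ω) f ∂μ = 0 := by
    simp_rw [fun ω => real_inner_comm f (ε ω)]
    rw [integral_inner hεint, hεmean, inner_zero_right]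
  calc ∫ ω, ⨆ g : G, inner ℝ (g • ε ω) t ∂μ
      ≤ ∫ ω, (‖ε ω‖ * ‖t - f‖ + inner ℝ (ε ω) f) ∂μ :=
        integral_mono hsup ((hε1.mul_const _).add hinner)
          fun ω => iSup_inner_smul_le hlin hiso (ε ω) t hf
    _ = ‖t - f‖ * ∫ ω, ‖ε ω‖ ∂μ := by
        rw [integral_add (hε1.mul_const _) hinner, integral_mul_const, hmean, add_zero, mul_comm]

end IsometricAction

theorem stmt13_general {M G Ω : Type*} [NormedAddCommGroup M] [InnerProductSpace ℝ M]
    [CompleteSpace M] [Group G] [MulAction G M] [MeasurableSpace Ω]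
    (μ : Measure Ω)
    (hlin : ∀ g : G, IsLinearMap ℝ fun x : M => g • x)
    (hiso : ∀ (g : G) (x : M), ‖g • x‖ = ‖x‖)
    (ε : Ω → M) (t₀ : M) (ht₀ : t₀ ≠ 0)
    (hεint : Integrable ε μ) (hεmean : ∫ ω, ε ω ∂μ = 0)
    (hsup : Integrable (fun ω => ⨆ g : G, (inner ℝ (g • ε ω) t₀ : ℝ)) μ) :
    (∫ ω, ⨆ g : G, (inner ℝ (g • ε ω) t₀ : ℝ) ∂μ) / ‖t₀‖
      ≤ Metric.infDist (‖t₀‖⁻¹ • t₀) {x : M | ∀ g : G, g • x = x}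
          * ∫ ω, ‖ε ω‖ ∂μ := by
  have hnorm : 0 < ‖t₀‖ := norm_pos_iff.mpr ht₀
  have hzero : (0 : M) ∈ fixedPoints G M := fun g => (hlin g).map_zero
  refine Metric.le_infDist_mul ⟨0, hzero⟩ (integral_nonneg fun _ => norm_nonneg _) fun h hh => ?_
  have hscale : ‖t₀ - ‖t₀‖ • h‖ = ‖t₀‖ * dist (‖t₀‖⁻¹ • t₀) h := by
    rw [dist_eq_norm, ← norm_smul_of_nonneg hnorm.le, smul_sub, smul_inv_smul₀ hnorm.ne']
  rw [div_le_iff₀ hnorm, mul_right_comm, mul_comm _ ‖t₀‖, ← hscale]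
  exact integral_iSup_inner_smul_le hlin hiso hεint hεmean t₀ hsup
    (smul_mem_fixedPoints_of_isLinearMap hlin hh _)

/-- Upper bound on `ν`: `ν = E(sup_g ⟨g•ε, t₀⟩)/‖t₀‖ ≤ dist(t₀/‖t₀‖, Fix(M)) ·
E‖ε‖`. -/
theorem stmt13 {M G Ω : Type*} [NormedAddCommGroup M] [InnerProductSpace ℝ M]
    [CompleteSpace M] [Group G] [MulAction G M] [MeasurableSpace Ω]
    (μ : Measure Ω) [IsProbabilityMeasure μ]
    (hlin : ∀ g : G, IsLinearMap ℝ fun x : M => g • x)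
    (hiso : ∀ (g : G) (x : M), ‖g • x‖ = ‖x‖)
    (ε : Ω → M) (t₀ : M) (ht₀ : t₀ ≠ 0) (σ : ℝ) (hσ : 0 < σ)
    (hεint : Integrable ε μ) (hεmean : ∫ ω, ε ω ∂μ = 0)
    (hε2 : (∫ ω, ‖ε ω‖ ^ 2 ∂μ) = 1)
    (hε2int : Integrable (fun ω => ‖ε ω‖ ^ 2) μ)
    (hε1 : Integrable (fun ω => ‖ε ω‖) μ)
    (hbdd : ∀ ω, BddAbove (Set.range fun g : G => (inner ℝ (g • ε ω) t₀ : ℝ)))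
    (hsup : Integrable (fun ω => ⨆ g : G, (inner ℝ (g • ε ω) t₀ : ℝ)) μ) :
    (∫ ω, ⨆ g : G, (inner ℝ (g • ε ω) t₀ : ℝ) ∂μ) / ‖t₀‖
      ≤ Metric.infDist (‖t₀‖⁻¹ • t₀) {x : M | ∀ g : G, g • x = x}
          * ∫ ω, ‖ε ω‖ ∂μ :=
  stmt13_general μ hlin hiso ε t₀ ht₀ hεint hεmean hsup
end

section
/- Let G act linearly and isometrically on a Hilbert space M, X = t₀ + σε with t₀ a fixed point of G, E(ε) = 0, E‖ε‖² = 1. Then for any unit vector v and λ > 0, the quotient variance satisfies F(t₀ + λv) = E‖X‖² − ‖t₀‖² − 2λ E(sup_g ⟨v, g·(X − t₀)⟩) + λ², and if a Fréchet mean of [X] exists, its quotient distance to [t₀] equals σ · sup_{‖v‖=1} E(sup_{g∈G} ⟨v, g·ε⟩). -/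
open MeasureTheory
open scoped RealInnerProductSpace

/-!
Since `t₀` is fixed and `G` acts by linear isometries,
`‖g • X - m‖² = ‖m - t₀‖² + σ² ‖ε‖² - 2σ ⟪m - t₀, g • ε⟫`, so the quotient variance is
`F(m) = ‖m - t₀‖² + σ² E‖ε‖² - 2σ K(m - t₀)` with `K(w) = E sup_g ⟪w, g • ε⟫`. The function `K` is
positively homogeneous and, because `E ε = 0`, nonnegative. Along the ray `t₀ + λ v`, `‖v‖ = 1`,
the variance is `λ² - 2σλ K(v)` up to a constant, minimal at `λ = σ K(v)` with value `-(σ K(v))²`;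
hence a global minimizer lies at distance `σ sup_{‖v‖=1} K(v)` from `t₀`.
-/

theorem ciInf_const_sub_mul {ι : Sort*} [Nonempty ι] {f : ι → ℝ} (hf : BddAbove (Set.range f))
    (C : ℝ) {c : ℝ} (hc : 0 ≤ c) : ⨅ i, (C - c * f i) = C - c * ⨆ i, f i := by
  have h_anti : Antitone fun x : ℝ => C - c * x := fun _ _ hxy =>
    sub_le_sub_left (mul_le_mul_of_nonneg_left hxy hc) C
  exact (h_anti.map_ciSup_of_continuousAt (by fun_prop) hf).symm

theorem norm_eq_iSup_sphere_of_isMinOn {E : Type*} [NormedAddCommGroup E] [NormedSpace ℝ E]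
    {h : E → ℝ} (h_smul : ∀ (c : ℝ) (w : E), 0 ≤ c → h (c • w) = c * h w)
    (h_nonneg : ∀ w, 0 ≤ h w) {u : E}
    (hu : IsMinOn (fun w => ‖w‖ ^ 2 - 2 * h w) Set.univ u) :
    ‖u‖ = ⨆ v : Metric.sphere (0 : E) 1, h v := by
  have h_ray : ∀ (w : E) (c : ℝ), 0 ≤ c → ‖u‖ ^ 2 - 2 * h u ≤ c ^ 2 * ‖w‖ ^ 2 - 2 * (c * h w) :=
    fun w c hc => by
      simpa only [norm_smul, Real.norm_eq_abs, abs_of_nonneg hc, mul_pow, h_smul c w hc]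
        using isMinOn_univ_iff.1 hu (c • w)
  have h_self : h u = ‖u‖ ^ 2 := by
    rcases eq_or_ne u 0 with rfl | hu0
    · simpa using h_smul 0 0 le_rfl
    · have hpos : 0 < ‖u‖ ^ 2 := by positivity
      have := h_ray u (h u / ‖u‖ ^ 2) (div_nonneg (h_nonneg u) hpos.le)
      field_simp at this
      nlinarith
  have h_le : ∀ v : Metric.sphere (0 : E) 1, h v ≤ ‖u‖ := fun v => by
    have := h_ray v (h v) (h_nonneg v)
    rw [mem_sphere_zero_iff_norm.mp v.2, h_self] at this
    nlinarith [h_nonneg v, norm_nonneg u]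
  refine le_antisymm ?_ (Real.iSup_le h_le (norm_nonneg u))
  rcases eq_or_ne u 0 with rfl | hu0
  · simpa using Real.iSup_nonneg fun v : Metric.sphere (0 : E) 1 => h_nonneg v
  · have hv : ‖u‖⁻¹ • u ∈ Metric.sphere (0 : E) 1 := by
      simp [norm_smul, hu0]
    calc ‖u‖ = h (‖u‖⁻¹ • u) := by
          rw [h_smul _ _ (by positivity), h_self]
          field_simp
      _ ≤ ⨆ v : Metric.sphere (0 : E) 1, h v :=
          le_ciSup ⟨‖u‖, Set.forall_mem_range.2 h_le⟩ ⟨_, hv⟩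

section IsometricAction

variable {M G : Type*} [NormedAddCommGroup M] [InnerProductSpace ℝ M] [Group G] [MulAction G M]

theorem norm_smul_sub_of_smul_eq {g : G} (hlin : IsLinearMap ℝ fun x : M => g • x)
    (hiso : ∀ x : M, ‖g • x‖ = ‖x‖) {t₀ : M} (hfix : g • t₀ = t₀) (m : M) :
    ‖g • m - t₀‖ = ‖m - t₀‖ := by
  conv_lhs => rw [← hfix]
  rw [← hlin.map_sub, hiso]

theorem norm_smul_add_smul_sub_sq {g : G} (hlin : IsLinearMap ℝ fun x : M => g • x)
    (hiso : ∀ x : M, ‖g • x‖ = ‖x‖) {t₀ : M} (hfix : g • t₀ = t₀) (σ : ℝ) (e m : M) :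
    ‖g • (t₀ + σ • e) - m‖ ^ 2 = ‖m - t₀‖ ^ 2 + σ ^ 2 * ‖e‖ ^ 2 - 2 * σ * ⟪m - t₀, g • e⟫ := by
  have h_eq : g • (t₀ + σ • e) - m = σ • (g • e) - (m - t₀) := by
    rw [hlin.map_add, hlin.map_smul, hfix]
    abel
  rw [h_eq, norm_sub_sq_real, norm_smul, mul_pow, Real.norm_eq_abs, sq_abs, hiso,
    real_inner_smul_left, real_inner_comm]
  ring

theorem iInf_norm_smul_add_smul_sub_sq (hlin : ∀ g : G, IsLinearMap ℝ fun x : M => g • x)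
    (hiso : ∀ (g : G) (x : M), ‖g • x‖ = ‖x‖) {t₀ : M} (hfix : ∀ g : G, g • t₀ = t₀)
    {σ : ℝ} (hσ : 0 ≤ σ) {e m : M} (hbdd : BddAbove (Set.range fun g : G => ⟪m - t₀, g • e⟫)) :
    ⨅ g : G, ‖g • (t₀ + σ • e) - m‖ ^ 2
      = ‖m - t₀‖ ^ 2 + σ ^ 2 * ‖e‖ ^ 2 - 2 * σ * ⨆ g : G, ⟪m - t₀, g • e⟫ := by
  have : Nonempty G := ⟨1⟩
  simp only [norm_smul_add_smul_sub_sq (hlin _) (hiso _) (hfix _)]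
  exact ciInf_const_sub_mul hbdd _ (by positivity)

end IsometricAction

section RandomTemplate

variable {M G Ω : Type*} [NormedAddCommGroup M] [InnerProductSpace ℝ M] [Group G] [MulAction G M]
  [MeasurableSpace Ω] {μ : Measure Ω}

variable (G) in
noncomputable def expectedSupInner (μ : Measure Ω) (ε : Ω → M) (w : M) : ℝ :=
  ∫ ω, ⨆ g : G, ⟪w, g • ε ω⟫ ∂μ

theorem expectedSupInner_smul (ε : Ω → M) (w : M) {c : ℝ} (hc : 0 ≤ c) :
    expectedSupInner G μ ε (c • w) = c * expectedSupInner G μ ε w := by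
  simp only [expectedSupInner, real_inner_smul_left, ← Real.mul_iSup_of_nonneg hc]
  exact integral_const_mul c _

theorem expectedSupInner_nonneg [CompleteSpace M] {ε : Ω → M} (hεint : Integrable ε μ)
    (hεmean : ∫ ω, ε ω ∂μ = 0) {w : M} (hbdd : ∀ ω, BddAbove (Set.range fun g : G => ⟪w, g • ε ω⟫))
    (hsup : Integrable (fun ω => ⨆ g : G, ⟪w, g • ε ω⟫) μ) :
    0 ≤ expectedSupInner G μ ε w :=
  calc 0 = ∫ ω, ⟪w, ε ω⟫ ∂μ := by rw [integral_inner hεint, hεmean, inner_zero_right]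
    _ ≤ expectedSupInner G μ ε w :=
        integral_mono (hεint.const_inner w) hsup fun ω => by simpa using le_ciSup (hbdd ω) 1

theorem integral_norm_add_smul_sq [CompleteSpace M] [IsProbabilityMeasure μ] {ε : Ω → M}
    (hεint : Integrable ε μ) (hεmean : ∫ ω, ε ω ∂μ = 0)
    (hε2int : Integrable (fun ω => ‖ε ω‖ ^ 2) μ) (t₀ : M) (σ : ℝ) :
    ∫ ω, ‖t₀ + σ • ε ω‖ ^ 2 ∂μ = ‖t₀‖ ^ 2 + σ ^ 2 * ∫ ω, ‖ε ω‖ ^ 2 ∂μ := by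
  have h_pt : ∀ ω, ‖t₀ + σ • ε ω‖ ^ 2 = ‖t₀‖ ^ 2 + 2 * σ * ⟪t₀, ε ω⟫ + σ ^ 2 * ‖ε ω‖ ^ 2 :=
    fun ω => by
      rw [norm_add_sq_real, norm_smul, mul_pow, Real.norm_eq_abs, sq_abs, real_inner_smul_right]
      ring
  have h_mean : ∫ ω, ⟪t₀, ε ω⟫ ∂μ = 0 := by rw [integral_inner hεint, hεmean, inner_zero_right]
  have h_int : Integrable (fun ω => ‖t₀‖ ^ 2 + 2 * σ * ⟪t₀, ε ω⟫) μ :=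
    (integrable_const _).add ((hεint.const_inner t₀).const_mul _)
  simp only [h_pt]
  rw [integral_add h_int (hε2int.const_mul _),
    integral_add (integrable_const _) ((hεint.const_inner t₀).const_mul _),
    integral_const_mul, integral_const_mul, h_mean]
  simp

theorem integral_iInf_norm_smul_add_smul_sub_sq [IsProbabilityMeasure μ]
    (hlin : ∀ g : G, IsLinearMap ℝ fun x : M => g • x) (hiso : ∀ (g : G) (x : M), ‖g • x‖ = ‖x‖)
    {t₀ : M} (hfix : ∀ g : G, g • t₀ = t₀) {σ : ℝ} (hσ : 0 ≤ σ) {ε : Ω → M}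
    (hε2int : Integrable (fun ω => ‖ε ω‖ ^ 2) μ) {m : M}
    (hbdd : ∀ ω, BddAbove (Set.range fun g : G => ⟪m - t₀, g • ε ω⟫))
    (hsup : Integrable (fun ω => ⨆ g : G, ⟪m - t₀, g • ε ω⟫) μ) :
    ∫ ω, ⨅ g : G, ‖g • (t₀ + σ • ε ω) - m‖ ^ 2 ∂μ
      = ‖m - t₀‖ ^ 2 + σ ^ 2 * ∫ ω, ‖ε ω‖ ^ 2 ∂μ - 2 * σ * expectedSupInner G μ ε (m - t₀) := by
  have h_int : Integrable (fun ω => ‖m - t₀‖ ^ 2 + σ ^ 2 * ‖ε ω‖ ^ 2) μ :=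
    (integrable_const _).add (hε2int.const_mul _)
  simp only [iInf_norm_smul_add_smul_sub_sq hlin hiso hfix hσ (hbdd _)]
  rw [integral_sub h_int (hsup.const_mul _),
    integral_add (integrable_const _) (hε2int.const_mul _), integral_const_mul,
    integral_const_mul]
  simp [expectedSupInner]

end RandomTemplate

theorem stmt16_general {M G Ω : Type*} [NormedAddCommGroup M] [InnerProductSpace ℝ M]
    [CompleteSpace M] [Group G] [MulAction G M] [MeasurableSpace Ω]
    (μ : Measure Ω) [IsProbabilityMeasure μ]
    (hlin : ∀ g : G, IsLinearMap ℝ fun x : M => g • x)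
    (hiso : ∀ (g : G) (x : M), ‖g • x‖ = ‖x‖)
    (ε : Ω → M) (t₀ : M) (σ : ℝ) (hσ : 0 < σ)
    (hεint : Integrable ε μ) (hεmean : ∫ ω, ε ω ∂μ = 0)
    (hε2int : Integrable (fun ω => ‖ε ω‖ ^ 2) μ)
    (X : Ω → M) (hX : ∀ ω, X ω = t₀ + σ • ε ω)
    (hfix : ∀ g : G, g • t₀ = t₀)
    (hbdd : ∀ (ω) (v : M), BddAbove
      (Set.range fun g : G => (inner ℝ v (g • ε ω) : ℝ)))
    (hsup : ∀ v : M, Integrable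
      (fun ω => ⨆ g : G, (inner ℝ v (g • ε ω) : ℝ)) μ) :
    (∀ (v : M), ‖v‖ = 1 → ∀ lam : ℝ, 0 < lam →
      (∫ ω, ⨅ g : G, ‖g • X ω - (t₀ + lam • v)‖ ^ 2 ∂μ)
        = (∫ ω, ‖X ω‖ ^ 2 ∂μ) - ‖t₀‖ ^ 2
          - 2 * lam * (∫ ω, ⨆ g : G, (inner ℝ v (g • (X ω - t₀)) : ℝ) ∂μ)
          + lam ^ 2) ∧
    (∀ m₀ : M, (∀ m : M, (∫ ω, ⨅ g : G, ‖g • X ω - m₀‖ ^ 2 ∂μ)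
        ≤ ∫ ω, ⨅ g : G, ‖g • X ω - m‖ ^ 2 ∂μ) →
      (⨅ g : G, ‖g • m₀ - t₀‖)
        = σ * ⨆ v : Metric.sphere (0 : M) 1,
            ∫ ω, ⨆ g : G, (inner ℝ (v : M) (g • ε ω) : ℝ) ∂μ) := by
  obtain rfl : X = fun ω => t₀ + σ • ε ω := funext hX
  have hF (m : M) := integral_iInf_norm_smul_add_smul_sub_sq hlin hiso hfix hσ.le hε2int
    (fun ω => hbdd ω (m - t₀)) (hsup (m - t₀))
  refine ⟨fun v hv lam hlam => ?_, fun m₀ hmin => ?_⟩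
  · have h_centered : ∫ ω, ⨆ g : G, ⟪v, g • (t₀ + σ • ε ω - t₀)⟫ ∂μ
        = σ * expectedSupInner G μ ε v := by
      simp only [add_sub_cancel_left, fun g : G => (hlin g).map_smul, real_inner_smul_right,
        ← Real.mul_iSup_of_nonneg hσ.le]
      exact integral_const_mul σ _
    rw [hF, integral_norm_add_smul_sq hεint hεmean hε2int, h_centered, add_sub_cancel_left,
      expectedSupInner_smul _ _ hlam.le, norm_smul, Real.norm_of_nonneg hlam.le, hv]
    ring
  · have : Nonempty G := ⟨1⟩
    simp only [norm_smul_sub_of_smul_eq (hlin _) (hiso _) (hfix _), ciInf_const,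
      Real.mul_iSup_of_nonneg hσ.le]
    refine norm_eq_iSup_sphere_of_isMinOn (h := fun w => σ * expectedSupInner G μ ε w)
      (fun c w hc => ?_) (fun w => ?_) (isMinOn_univ_iff.2 fun w => ?_)
    · rw [expectedSupInner_smul _ _ hc]
      ring
    · exact mul_nonneg hσ.le (expectedSupInner_nonneg hεint hεmean (hbdd · w) (hsup w))
    · have := hmin (t₀ + w)
      rw [hF, hF, add_sub_cancel_left] at this
      linarith

/-- When the template `t₀` is a fixed point: expansion of the quotient
variance `F(t₀ + λv)` for unit `v` and `λ > 0`, and the consistency bias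
equals `σ · sup_{‖v‖=1} E(sup_g ⟨v, g•ε⟩)` for any Fréchet mean `[m⋆]`. -/
theorem stmt16 {M G Ω : Type*} [NormedAddCommGroup M] [InnerProductSpace ℝ M]
    [CompleteSpace M] [Nontrivial M] [Group G] [MulAction G M] [MeasurableSpace Ω]
    (μ : Measure Ω) [IsProbabilityMeasure μ]
    (hlin : ∀ g : G, IsLinearMap ℝ fun x : M => g • x)
    (hiso : ∀ (g : G) (x : M), ‖g • x‖ = ‖x‖)
    (ε : Ω → M) (t₀ : M) (σ : ℝ) (hσ : 0 < σ)
    (hεint : Integrable ε μ) (hεmean : ∫ ω, ε ω ∂μ = 0)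
    (hε2 : (∫ ω, ‖ε ω‖ ^ 2 ∂μ) = 1)
    (hε2int : Integrable (fun ω => ‖ε ω‖ ^ 2) μ)
    (X : Ω → M) (hX : ∀ ω, X ω = t₀ + σ • ε ω)
    (hfix : ∀ g : G, g • t₀ = t₀)
    (hbdd : ∀ (ω) (v : M), BddAbove
      (Set.range fun g : G => (inner ℝ v (g • ε ω) : ℝ)))
    (hsup : ∀ v : M, Integrable
      (fun ω => ⨆ g : G, (inner ℝ v (g • ε ω) : ℝ)) μ) :
    (∀ (v : M), ‖v‖ = 1 → ∀ lam : ℝ, 0 < lam →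
      (∫ ω, ⨅ g : G, ‖g • X ω - (t₀ + lam • v)‖ ^ 2 ∂μ)
        = (∫ ω, ‖X ω‖ ^ 2 ∂μ) - ‖t₀‖ ^ 2
          - 2 * lam * (∫ ω, ⨆ g : G, (inner ℝ v (g • (X ω - t₀)) : ℝ) ∂μ)
          + lam ^ 2) ∧
    (∀ m₀ : M, (∀ m : M, (∫ ω, ⨅ g : G, ‖g • X ω - m₀‖ ^ 2 ∂μ)
        ≤ ∫ ω, ⨅ g : G, ‖g • X ω - m‖ ^ 2 ∂μ) →
      (⨅ g : G, ‖g • m₀ - t₀‖)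
        = σ * ⨆ v : Metric.sphere (0 : M) 1,
            ∫ ω, ⨆ g : G, (inner ℝ (v : M) (g • ε ω) : ℝ) ∂μ) :=
  stmt16_general μ hlin hiso ε t₀ σ hσ hεint hεmean hε2int X hX hfix hbdd hsup
end

section
/- Consider the action of ℤ/2ℤ on ℝ² by coordinate swap: 1·(u,v) = (v,u). Let L = {(u,u) : u ∈ ℝ}, HP_A = {(u,v) : v > u}, HP_B = {(u,v) : v < u}. Let X be a random variable in ℝ² with E‖X‖² < ∞ and t₀ = E(X) ∈ HP_A ∪ L. Define Z = X·1_{X ∈ HP_A ∪ L} + (1·X)·1_{X ∈ HP_B}. Then E(Z) = E(X) if and only if P(X ∈ HP_B) = 0. In particular, if t₀ ∈ HP_A, then [t₀] is a Fréchet mean of [X] in ℝ²/(ℤ/2ℤ) if and only if the support of X is included in HP_A ∪ L. -/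
/-! For `m` in the closed half-plane `m 0 ≤ m 1`, the quotient distance is
`min ‖x - m‖ ‖swap x - m‖ = ‖sortCoords x - m‖`, where `sortCoords x` is the representative of
the orbit of `x` in that half-plane. So there the Fréchet function is `E‖Z - m‖²` with
`Z = sortCoords ∘ X`, i.e. `E‖Z - E Z‖² + ‖m - E Z‖²`; being swap-invariant, it is minimised at a
point `t` of the half-plane iff `t = E Z`. Since `(sortCoords x) 0 = min (x 0) (x 1) ≤ x 0`,
`E Z = E X` forces `min (X 0) (X 1) = X 0` a.s., i.e. `X` lies a.s. in the (closed) half-plane,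
which is the support condition. -/

open MeasureTheory Metric
open scoped ENNReal

local notation "ℝ²" => EuclideanSpace ℝ (Fin 2)

namespace MeasureTheory.Measure

lemma support_subset_iff_ae_mem {X : Type*} [TopologicalSpace X] [MeasurableSpace X]
    [HereditarilyLindelofSpace X] {μ : Measure X} {F : Set X} (hF : IsClosed F) :
    μ.support ⊆ F ↔ ∀ᵐ x ∂μ, x ∈ F :=
  ⟨fun h => Filter.mem_of_superset support_mem_ae h, support_subset_of_isClosed hF⟩

lemma mem_support_map_iff_forall_ball {Ω E : Type*} [MeasurableSpace Ω] [PseudoMetricSpace E]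
    [MeasurableSpace E] [OpensMeasurableSpace E] {μ : Measure Ω} {X : Ω → E}
    (hX : AEMeasurable X μ) {x : E} :
    x ∈ (μ.map X).support ↔ ∀ r > 0, 0 < μ {ω | X ω ∈ ball x r} := by
  rw [nhds_basis_ball.mem_measureSupport]
  simp only [map_apply_of_aemeasurable hX measurableSet_ball]
  rfl

end MeasureTheory.Measure

lemma forall_ball_pos_imp_mem_iff_ae_mem {Ω E : Type*} [MeasurableSpace Ω] [PseudoMetricSpace E]
    [SecondCountableTopology E] [MeasurableSpace E] [OpensMeasurableSpace E] {μ : Measure Ω}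
    {X : Ω → E} (hX : AEMeasurable X μ) {F : Set E} (hF : IsClosed F) :
    (∀ x, (∀ r > 0, 0 < μ {ω | X ω ∈ ball x r}) → x ∈ F) ↔ ∀ᵐ ω ∂μ, X ω ∈ F := by
  simp only [← Measure.mem_support_map_iff_forall_ball hX]
  exact (Measure.support_subset_iff_ae_mem hF).trans (ae_map_iff hX hF.measurableSet)

lemma integral_norm_sub_sq_eq {Ω E : Type*} [MeasurableSpace Ω] {μ : Measure Ω}
    [IsProbabilityMeasure μ] [NormedAddCommGroup E] [InnerProductSpace ℝ E] [CompleteSpace E]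
    {Z : Ω → E} (hZ : MemLp Z 2 μ) (m : E) :
    ∫ ω, ‖Z ω - m‖ ^ 2 ∂μ = ∫ ω, ‖Z ω - ∫ ω, Z ω ∂μ‖ ^ 2 ∂μ + ‖m - ∫ ω, Z ω ∂μ‖ ^ 2 := by
  set c := ∫ ω, Z ω ∂μ
  have hZc : Integrable (fun ω => Z ω - c) μ :=
    (hZ.integrable one_le_two).sub (integrable_const c)
  have hsq : Integrable (fun ω => ‖Z ω - c‖ ^ 2) μ :=
    (hZ.sub (memLp_const c)).integrable_norm_pow two_ne_zero
  have hinner : ∫ ω, inner ℝ (c - m) (Z ω - c) ∂μ = 0 := by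
    rw [integral_inner hZc, integral_sub (hZ.integrable one_le_two) (integrable_const c)]
    simp [c]
  have hexpand (ω : Ω) :
      ‖Z ω - m‖ ^ 2 = ‖Z ω - c‖ ^ 2 + (2 * inner ℝ (c - m) (Z ω - c) + ‖m - c‖ ^ 2) := by
    rw [show Z ω - m = (Z ω - c) + (c - m) by abel, norm_add_sq_real, real_inner_comm,
      norm_sub_rev c m]
    ring
  have hlin : Integrable (fun ω => 2 * inner ℝ (c - m) (Z ω - c)) μ :=
    (hZc.const_inner (c - m)).const_mul 2
  simp_rw [hexpand]
  rw [integral_add hsq (hlin.fun_add (integrable_const _)), integral_add hlin (integrable_const _),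
    integral_const_mul, hinner]
  simp

noncomputable def coordSwap : ℝ² ≃ₗᵢ[ℝ] ℝ² :=
  LinearIsometryEquiv.piLpCongrLeft 2 ℝ ℝ (Equiv.swap 0 1)

@[simp] lemma coordSwap_apply_zero (x : ℝ²) : coordSwap x 0 = x 1 := by
  simp [coordSwap, Equiv.piCongrLeft'_apply]

@[simp] lemma coordSwap_apply_one (x : ℝ²) : coordSwap x 1 = x 0 := by
  simp [coordSwap, Equiv.piCongrLeft'_apply]

lemma eq_coordSwap {f : ℝ² → ℝ²}
    (hf : ∀ x, f x 0 = x 1 ∧ f x 1 = x 0) : f = coordSwap := by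
  ext x i
  fin_cases i
  · simp [(hf x).1]
  · simp [(hf x).2]

@[simp] lemma coordSwap_coordSwap (x : ℝ²) : coordSwap (coordSwap x) = x := by
  ext i; fin_cases i <;> simp

lemma norm_sq_fin_two (x : ℝ²) : ‖x‖ ^ 2 = x 0 ^ 2 + x 1 ^ 2 := by
  simp [EuclideanSpace.norm_sq_eq, Fin.sum_univ_two]

noncomputable def sortCoords (x : ℝ²) : ℝ² :=
  if x 1 < x 0 then coordSwap x else x

lemma sortCoords_apply_zero (x : ℝ²) : sortCoords x 0 = min (x 0) (x 1) := by
  unfold sortCoords; split_ifs with h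
  · simp [min_eq_right h.le]
  · simp [min_eq_left (not_lt.1 h)]

lemma sortCoords_apply_one (x : ℝ²) : sortCoords x 1 = max (x 0) (x 1) := by
  unfold sortCoords; split_ifs with h
  · simp [max_eq_left h.le]
  · simp [max_eq_right (not_lt.1 h)]

lemma sortCoords_apply_zero_le_one (x : ℝ²) : sortCoords x 0 ≤ sortCoords x 1 := by
  rw [sortCoords_apply_zero, sortCoords_apply_one]; exact min_le_max

lemma norm_sortCoords (x : ℝ²) : ‖sortCoords x‖ = ‖x‖ := by
  unfold sortCoords; split_ifs <;> simp

lemma measurable_sortCoords : Measurable sortCoords :=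
  Measurable.ite (measurableSet_lt (by fun_prop) (by fun_prop)) coordSwap.continuous.measurable
    measurable_id

lemma min_norm_sub_coordSwap_sub {x m : ℝ²} (hm : m 0 ≤ m 1) :
    min ‖x - m‖ ‖coordSwap x - m‖ = ‖sortCoords x - m‖ := by
  have key : ‖x - m‖ ^ 2 - ‖coordSwap x - m‖ ^ 2 = 2 * (x 0 - x 1) * (m 1 - m 0) := by
    simp only [norm_sq_fin_two, PiLp.sub_apply, coordSwap_apply_zero, coordSwap_apply_one]
    ring
  unfold sortCoords; split_ifs with h
  · refine min_eq_right ((sq_le_sq₀ (norm_nonneg _) (norm_nonneg _)).1 ?_)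
    nlinarith
  · refine min_eq_left ((sq_le_sq₀ (norm_nonneg _) (norm_nonneg _)).1 ?_)
    nlinarith

lemma min_norm_sub_coordSwap_sub_coordSwap (x m : ℝ²) :
    min ‖x - coordSwap m‖ ‖coordSwap x - coordSwap m‖ = min ‖x - m‖ ‖coordSwap x - m‖ := by
  have h : ‖x - coordSwap m‖ = ‖coordSwap x - m‖ := by
    rw [← coordSwap.norm_map, map_sub, coordSwap_coordSwap]
  rw [h, ← map_sub, coordSwap.norm_map, min_comm]

section RandomVector

variable {Ω : Type*} [MeasurableSpace Ω] {μ : Measure Ω} {X : Ω → ℝ²}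

lemma MeasureTheory.MemLp.sortCoords_comp {p : ℝ≥0∞} (hX : MemLp X p μ) :
    MemLp (fun ω => sortCoords (X ω)) p μ :=
  hX.of_le (measurable_sortCoords.comp_aemeasurable hX.aemeasurable).aestronglyMeasurable
    (ae_of_all _ fun ω => (norm_sortCoords (X ω)).le)

lemma MeasureTheory.Integrable.sortCoords_comp (hX : Integrable X μ) :
    Integrable (fun ω => sortCoords (X ω)) μ :=
  memLp_one_iff_integrable.1 (memLp_one_iff_integrable.2 hX).sortCoords_comp

lemma integral_sortCoords_comp_eq_iff (hX : Integrable X μ) :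
    ∫ ω, sortCoords (X ω) ∂μ = ∫ ω, X ω ∂μ ↔ μ {ω | X ω 1 < X ω 0} = 0 := by
  constructor
  · intro h
    have h0 : ∫ ω, min (X ω 0) (X ω 1) ∂μ = ∫ ω, X ω 0 ∂μ := by
      simpa [eval_integral_piLp hX.eval_piLp, eval_integral_piLp hX.sortCoords_comp.eval_piLp,
        sortCoords_apply_zero] using congrArg (· 0) h
    have hmin := (integral_eq_iff_of_ae_le ((hX.eval_piLp 0).inf (hX.eval_piLp 1))
      (hX.eval_piLp 0) (ae_of_all _ fun ω => min_le_left _ _)).1 h0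
    refine measure_eq_zero_iff_ae_notMem.2 ?_
    filter_upwards [hmin] with ω hω
    exact not_lt.2 (min_eq_left_iff.1 hω)
  · intro h
    refine integral_congr_ae ?_
    filter_upwards [measure_eq_zero_iff_ae_notMem.1 h] with ω hω
    exact if_neg hω

lemma integral_sortCoords_comp_apply_zero_le_one (hX : Integrable X μ) :
    (∫ ω, sortCoords (X ω) ∂μ) 0 ≤ (∫ ω, sortCoords (X ω) ∂μ) 1 := by
  have hZ := hX.sortCoords_comp.eval_piLp
  rw [eval_integral_piLp hZ, eval_integral_piLp hZ]
  exact integral_mono (hZ 0) (hZ 1) fun ω => sortCoords_apply_zero_le_one (X ω)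

variable [IsProbabilityMeasure μ]

lemma integral_min_norm_sub_sq_eq (hX : MemLp X 2 μ) {m : ℝ²} (hm : m 0 ≤ m 1) :
    ∫ ω, min ‖X ω - m‖ ‖coordSwap (X ω) - m‖ ^ 2 ∂μ =
      ∫ ω, ‖sortCoords (X ω) - ∫ ω, sortCoords (X ω) ∂μ‖ ^ 2 ∂μ
        + ‖m - ∫ ω, sortCoords (X ω) ∂μ‖ ^ 2 := by
  simp_rw [min_norm_sub_coordSwap_sub hm]
  exact integral_norm_sub_sq_eq hX.sortCoords_comp m

lemma forall_integral_min_norm_sub_sq_le_iff (hX : MemLp X 2 μ) {t : ℝ²} (ht : t 0 ≤ t 1) :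
    (∀ m, ∫ ω, min ‖X ω - t‖ ‖coordSwap (X ω) - t‖ ^ 2 ∂μ
        ≤ ∫ ω, min ‖X ω - m‖ ‖coordSwap (X ω) - m‖ ^ 2 ∂μ) ↔
      ∫ ω, sortCoords (X ω) ∂μ = t := by
  set c := ∫ ω, sortCoords (X ω) ∂μ
  have hc : c 0 ≤ c 1 := integral_sortCoords_comp_apply_zero_le_one (hX.integrable one_le_two)
  constructor
  · intro h
    have hle := h c
    rw [integral_min_norm_sub_sq_eq hX ht, integral_min_norm_sub_sq_eq hX hc, sub_self, norm_zero]
      at hle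
    have hdist : ‖t - c‖ = 0 := by nlinarith [norm_nonneg (t - c)]
    exact (sub_eq_zero.1 (norm_eq_zero.1 hdist)).symm
  · rintro rfl m
    wlog hm : m 0 ≤ m 1 generalizing m
    · simp_rw [← min_norm_sub_coordSwap_sub_coordSwap _ m]
      exact this _ (by simp only [coordSwap_apply_zero, coordSwap_apply_one]; linarith)
    rw [integral_min_norm_sub_sq_eq hX hc, integral_min_norm_sub_sq_eq hX hm, sub_self, norm_zero]
    gcongr
    positivity

end RandomVector

/-- Action of `ℤ/2ℤ` on `ℝ²` by coordinate swap. With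
`L = {x0 = x1}`, `HP_A = {x0 < x1}`, `HP_B = {x1 < x0}`,
`t₀ = E(X) ∈ HP_A ∪ L` and `Z = X·1_{X ∈ HP_A ∪ L} + (swap X)·1_{X ∈ HP_B}`:
`E(Z) = E(X)` iff `P(X ∈ HP_B) = 0`; and if `t₀ ∈ HP_A`, `[t₀]` is a Fréchet
mean of `[X]` iff the support of `X` is contained in `HP_A ∪ L`. -/
theorem stmt17 {Ω : Type*} [MeasurableSpace Ω] (μ : Measure Ω)
    [IsProbabilityMeasure μ]
    (swap : EuclideanSpace ℝ (Fin 2) → EuclideanSpace ℝ (Fin 2))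
    (hswap : ∀ x : EuclideanSpace ℝ (Fin 2), swap x 0 = x 1 ∧ swap x 1 = x 0)
    (X : Ω → EuclideanSpace ℝ (Fin 2))
    (hX2 : Integrable (fun ω => ‖X ω‖ ^ 2) μ)
    (hXint : Integrable X μ)
    (t₀ : EuclideanSpace ℝ (Fin 2))
    (hmean : ∫ ω, X ω ∂μ = t₀)
    (ht₀ : t₀ 0 ≤ t₀ 1) :
    ((∫ ω, (if X ω 1 < X ω 0 then swap (X ω) else X ω) ∂μ) = t₀ ↔
      μ {ω | X ω 1 < X ω 0} = 0) ∧
    (t₀ 0 < t₀ 1 →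
      ((∀ m : EuclideanSpace ℝ (Fin 2),
          (∫ ω, (min ‖X ω - t₀‖ ‖swap (X ω) - t₀‖) ^ 2 ∂μ)
            ≤ ∫ ω, (min ‖X ω - m‖ ‖swap (X ω) - m‖) ^ 2 ∂μ) ↔
        (∀ x : EuclideanSpace ℝ (Fin 2),
          (∀ r > 0, 0 < μ {ω | X ω ∈ Metric.ball x r}) → x 0 ≤ x 1))) := by
  obtain rfl := eq_coordSwap hswap
  have hX : MemLp X 2 μ := (memLp_two_iff_integrable_sq_norm hXint.1).2 hX2
  have hmeanZ : ∫ ω, sortCoords (X ω) ∂μ = t₀ ↔ μ {ω | X ω 1 < X ω 0} = 0 :=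
    hmean ▸ integral_sortCoords_comp_eq_iff hXint
  have hsupport : (∀ x : ℝ², (∀ r > 0, 0 < μ {ω | X ω ∈ ball x r}) → x 0 ≤ x 1) ↔
      μ {ω | X ω 1 < X ω 0} = 0 := by
    refine (forall_ball_pos_imp_mem_iff_ae_mem (F := {x : ℝ² | x 0 ≤ x 1}) hXint.aemeasurable
      (isClosed_le (by fun_prop) (by fun_prop))).trans ?_
    rw [measure_eq_zero_iff_ae_notMem]
    simp only [Set.mem_ofPred_eq, not_lt]
  exact ⟨hmeanZ, fun _ =>
    (forall_integral_min_norm_sub_sq_le_iff hX ht₀).trans (hmeanZ.trans hsupport.symm)⟩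
end

section
/- Let G be a finite group acting isometrically (each g acting as an isometry of ℝⁿ) and let X ∼ N(t₀, s²Id_{ℝⁿ}) be a Gaussian vector. If m⋆ is a global minimizer of F(m) = E(min_{g∈G} ‖g·X − m‖²), then the consistency bias satisfies d_Q([t₀],[m⋆]) ≤ s·sqrt(8·log|G|). -/
open MeasureTheory ProbabilityTheory
open scoped NNReal

/-!
Write `ε = X - t₀`, `u g = g • m⋆ - t₀` and `Y g = 2⟪ε, u g⟫ - ‖u g‖²`. Expanding the square,
`min_g ‖g • X - m⋆‖² = ‖ε‖² - max_g Y g`, so `F(m⋆) ≤ F(t₀) ≤ E‖ε‖²` says that `max_g Y g` has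
nonnegative mean. As `t · max_g Y g + 1 ≤ ∑_g exp (t · Y g)` and the subgaussian bound gives
`E exp (t · Y g) ≤ exp ((2s²t² - t) ‖u g‖²)`, the choice `t = 1 / (4s²)` yields
`1 ≤ |G| exp (-d² / (8s²))` for `d = d_Q([t₀], [m⋆]) ≤ ‖u g‖`. The case `s = 0` follows by
letting the variance proxy decrease to `s`.
-/

open Real Finset
open scoped RealInnerProductSpace

section LogSumExp

variable {Ω ι : Type*} [MeasurableSpace Ω] {μ : Measure Ω} [IsProbabilityMeasure μ]
  [Fintype ι] [Nonempty ι]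

lemma mul_integral_iSup_add_one_le_sum_integral_exp {Y : ι → Ω → ℝ} (t : ℝ)
    (hS : Integrable (fun ω => ⨆ i, Y i ω) μ) (hY : ∀ i, Integrable (fun ω => exp (t * Y i ω)) μ) :
    t * ∫ ω, ⨆ i, Y i ω ∂μ + 1 ≤ ∑ i, ∫ ω, exp (t * Y i ω) ∂μ := by
  have hpointwise : ∀ ω, t * (⨆ i, Y i ω) + 1 ≤ ∑ i, exp (t * Y i ω) := by
    intro ω
    obtain ⟨i, hi⟩ := exists_eq_ciSup_of_finite (f := fun i => Y i ω)
    calc t * (⨆ i, Y i ω) + 1 ≤ exp (t * Y i ω) := by rw [hi]; exact add_one_le_exp _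
      _ ≤ ∑ i, exp (t * Y i ω) :=
        single_le_sum (f := fun j => exp (t * Y j ω)) (fun j _ => (exp_pos _).le) (mem_univ i)
  calc t * ∫ ω, ⨆ i, Y i ω ∂μ + 1 = ∫ ω, (t * ⨆ i, Y i ω) + 1 ∂μ := by
        rw [integral_add (hS.const_mul t) (integrable_const 1), integral_const_mul]
        simp
    _ ≤ ∫ ω, ∑ i, exp (t * Y i ω) ∂μ :=
        integral_mono ((hS.const_mul t).add (integrable_const 1))
          (integrable_finsetSum _ fun i _ => hY i) hpointwise
    _ = ∑ i, ∫ ω, exp (t * Y i ω) ∂μ := integral_finsetSum _ fun i _ => hY i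

end LogSumExp

section Subgaussian

variable {Ω E ι : Type*} [MeasurableSpace Ω] {μ : Measure Ω}
  [NormedAddCommGroup E] [InnerProductSpace ℝ E]

lemma exp_mul_two_inner_sub_norm_sq (t : ℝ) (x u : E) :
    exp (t * (2 * ⟪x, u⟫ - ‖u‖ ^ 2)) = exp ⟪x, (2 * t) • u⟫ * exp (-(t * ‖u‖ ^ 2)) := by
  rw [← exp_add, real_inner_smul_right]
  ring_nf

lemma integral_exp_mul_two_inner_sub_norm_sq_le {ε : Ω → E} {σ : ℝ}
    (hmgf : ∀ w, ∫ ω, exp ⟪ε ω, w⟫ ∂μ ≤ exp (σ ^ 2 * ‖w‖ ^ 2 / 2)) (t : ℝ) (u : E) :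
    ∫ ω, exp (t * (2 * ⟪ε ω, u⟫ - ‖u‖ ^ 2)) ∂μ ≤ exp ((2 * σ ^ 2 * t ^ 2 - t) * ‖u‖ ^ 2) := by
  have hnorm : ‖(2 * t) • u‖ ^ 2 = 4 * t ^ 2 * ‖u‖ ^ 2 := by
    rw [norm_smul, mul_pow, norm_eq_abs, sq_abs]
    ring
  simp only [exp_mul_two_inner_sub_norm_sq]
  rw [integral_mul_const]
  calc (∫ ω, exp ⟪ε ω, (2 * t) • u⟫ ∂μ) * exp (-(t * ‖u‖ ^ 2))
      ≤ exp (σ ^ 2 * ‖(2 * t) • u‖ ^ 2 / 2) * exp (-(t * ‖u‖ ^ 2)) :=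
        mul_le_mul_of_nonneg_right (hmgf _) (exp_pos _).le
    _ = exp ((2 * σ ^ 2 * t ^ 2 - t) * ‖u‖ ^ 2) := by
        rw [← exp_add, hnorm]
        ring_nf

variable [IsProbabilityMeasure μ] [Fintype ι] [Nonempty ι]

theorem le_mul_sqrt_log_card_of_subgaussian_of_pos {ε : Ω → E} {σ : ℝ} (hσ : 0 < σ)
    (hint : ∀ w, Integrable (fun ω => exp ⟪ε ω, w⟫) μ)
    (hmgf : ∀ w, ∫ ω, exp ⟪ε ω, w⟫ ∂μ ≤ exp (σ ^ 2 * ‖w‖ ^ 2 / 2))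
    {u : ι → E} {d : ℝ} (hd0 : 0 ≤ d) (hd : ∀ i, d ≤ ‖u i‖)
    (hS : Integrable (fun ω => ⨆ i, (2 * ⟪ε ω, u i⟫ - ‖u i‖ ^ 2)) μ)
    (hS0 : 0 ≤ ∫ ω, ⨆ i, (2 * ⟪ε ω, u i⟫ - ‖u i‖ ^ 2) ∂μ) :
    d ≤ σ * √(8 * log (Fintype.card ι)) := by
  -- `t` minimises the exponent `(2σ²t² - t)‖u‖²` produced by the subgaussian bound.
  set t := (4 * σ ^ 2)⁻¹
  have hexponent : ∀ i, (2 * σ ^ 2 * t ^ 2 - t) * ‖u i‖ ^ 2 ≤ -(d ^ 2 / (8 * σ ^ 2)) := by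
    intro i
    have hcoeff : 2 * σ ^ 2 * t ^ 2 - t = -(8 * σ ^ 2)⁻¹ := by
      simp only [t]; field_simp; ring
    rw [hcoeff, neg_mul, neg_le_neg_iff, inv_mul_eq_div]
    gcongr
    exact hd i
  have hint_exp : ∀ i, Integrable (fun ω => exp (t * (2 * ⟪ε ω, u i⟫ - ‖u i‖ ^ 2))) μ := by
    intro i
    simp only [exp_mul_two_inner_sub_norm_sq]
    exact (hint _).mul_const _
  have hcard : 1 ≤ Fintype.card ι * exp (-(d ^ 2 / (8 * σ ^ 2))) :=
    calc (1 : ℝ) ≤ t * ∫ ω, ⨆ i, (2 * ⟪ε ω, u i⟫ - ‖u i‖ ^ 2) ∂μ + 1 :=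
          le_add_of_nonneg_left (mul_nonneg (by positivity) hS0)
      _ ≤ ∑ i, ∫ ω, exp (t * (2 * ⟪ε ω, u i⟫ - ‖u i‖ ^ 2)) ∂μ :=
          mul_integral_iSup_add_one_le_sum_integral_exp t hS hint_exp
      _ ≤ ∑ _i : ι, exp (-(d ^ 2 / (8 * σ ^ 2))) := sum_le_sum fun i _ =>
          (integral_exp_mul_two_inner_sub_norm_sq_le hmgf t (u i)).trans
            (exp_le_exp.2 (hexponent i))
      _ = Fintype.card ι * exp (-(d ^ 2 / (8 * σ ^ 2))) := by simp
  have hlog : d ^ 2 / (8 * σ ^ 2) ≤ log (Fintype.card ι) := by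
    rw [exp_neg, ← div_eq_mul_inv, one_le_div (exp_pos _)] at hcard
    exact (le_log_iff_exp_le (by exact_mod_cast Fintype.card_pos)).2 hcard
  rw [div_le_iff₀ (by positivity)] at hlog
  calc d ≤ √(σ ^ 2 * (8 * log (Fintype.card ι))) := le_sqrt_of_sq_le (by linarith)
    _ = σ * √(8 * log (Fintype.card ι)) := by rw [sqrt_mul (sq_nonneg σ), sqrt_sq hσ.le]

theorem le_mul_sqrt_log_card_of_subgaussian {ε : Ω → E} {σ : ℝ} (hσ : 0 ≤ σ)
    (hint : ∀ w, Integrable (fun ω => exp ⟪ε ω, w⟫) μ)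
    (hmgf : ∀ w, ∫ ω, exp ⟪ε ω, w⟫ ∂μ ≤ exp (σ ^ 2 * ‖w‖ ^ 2 / 2))
    {u : ι → E} {d : ℝ} (hd0 : 0 ≤ d) (hd : ∀ i, d ≤ ‖u i‖)
    (hS : Integrable (fun ω => ⨆ i, (2 * ⟪ε ω, u i⟫ - ‖u i‖ ^ 2)) μ)
    (hS0 : 0 ≤ ∫ ω, ⨆ i, (2 * ⟪ε ω, u i⟫ - ‖u i‖ ^ 2) ∂μ) :
    d ≤ σ * √(8 * log (Fintype.card ι)) := by
  have hlarger : ∀ σ' > σ, d ≤ σ' * √(8 * log (Fintype.card ι)) := fun σ' hσ' =>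
    le_mul_sqrt_log_card_of_subgaussian_of_pos (hσ.trans_lt hσ') hint
      (fun w => (hmgf w).trans (exp_le_exp.2 (by gcongr))) hd0 hd hS hS0
  exact ge_of_tendsto ((continuous_mul_const _).continuousWithinAt (s := Set.Ioi σ))
    (eventually_nhdsWithin_of_forall hlarger)

end Subgaussian

section IsometricAction

variable {G : Type*} [Group G]

lemma dist_smul_eq_dist_inv_smul {P : Type*} [PseudoMetricSpace P] [MulAction G P]
    (hiso : ∀ g : G, Isometry (fun x : P => g • x)) (g : G) (x y : P) :
    dist (g • x) y = dist x (g⁻¹ • y) := by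
  rw [← (hiso g).dist_eq x (g⁻¹ • y), smul_inv_smul]

lemma iInf_dist_smul_le_dist_smul {P : Type*} [PseudoMetricSpace P] [MulAction G P] [Finite G]
    (hiso : ∀ g : G, Isometry (fun x : P => g • x)) (x y : P) (g : G) :
    ⨅ h : G, dist (h • x) y ≤ dist (g • y) x := by
  calc ⨅ h : G, dist (h • x) y ≤ dist (g⁻¹ • x) y := ciInf_le (Finite.bddBelow_range _) g⁻¹
    _ = dist (g • y) x := by rw [dist_smul_eq_dist_inv_smul hiso, inv_inv, dist_comm]

variable {E : Type*} [NormedAddCommGroup E] [MulAction G E]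

lemma iInf_dist_smul_sq_eq_sub_iSup [InnerProductSpace ℝ E] [Finite G]
    (hiso : ∀ g : G, Isometry (fun x : E => g • x)) (x m t : E) :
    ⨅ g : G, dist (g • x) m ^ 2
      = ‖x - t‖ ^ 2 - ⨆ g : G, (2 * ⟪x - t, g • m - t⟫ - ‖g • m - t‖ ^ 2) := by
  have hexpand : ∀ g : G, dist x (g • m) ^ 2
      = ‖x - t‖ ^ 2 - (2 * ⟪x - t, g • m - t⟫ - ‖g • m - t‖ ^ 2) := by
    intro g
    rw [dist_eq_norm, show x - g • m = (x - t) - (g • m - t) by abel, norm_sub_sq_real]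
    ring
  have : Nonempty G := ⟨1⟩
  calc ⨅ g : G, dist (g • x) m ^ 2 = ⨅ g : G, dist x (g⁻¹ • m) ^ 2 := by
        simp only [dist_smul_eq_dist_inv_smul hiso]
    _ = ⨅ g : G, dist x (g • m) ^ 2 := (Equiv.inv G).iInf_comp (g := fun g => dist x (g • m) ^ 2)
    _ = _ := by
        simp only [hexpand]
        exact ((antitone_const_tsub (c := ‖x - t‖ ^ 2)).map_ciSup_of_continuousAt
          (continuous_const.sub continuous_id).continuousAt (Finite.bddAbove_range _)).symm

variable {Ω : Type*} [MeasurableSpace Ω] {μ : Measure Ω} [MeasurableSpace E] [BorelSpace E]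

lemma integrable_iInf_dist_smul_sq [IsFiniteMeasure μ] [Finite G]
    (hiso : ∀ g : G, Isometry (fun x : E => g • x)) {X : Ω → E} (hX : Measurable X) {t : E}
    (hX2 : Integrable (fun ω => ‖X ω - t‖ ^ 2) μ) (m : E) :
    Integrable (fun ω => ⨅ g : G, dist (g • X ω) m ^ 2) μ := by
  have hbound : ∀ ω, ⨅ g : G, dist (g • X ω) m ^ 2 ≤ 2 * (‖X ω - t‖ ^ 2 + dist t m ^ 2) := by
    intro ω
    calc ⨅ g : G, dist (g • X ω) m ^ 2 ≤ dist ((1 : G) • X ω) m ^ 2 :=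
          ciInf_le (Finite.bddBelow_range _) 1
      _ ≤ (‖X ω - t‖ + dist t m) ^ 2 := by
          rw [one_smul, ← dist_eq_norm]
          gcongr
          exact dist_triangle _ _ _
      _ ≤ 2 * (‖X ω - t‖ ^ 2 + dist t m ^ 2) := add_sq_le
  have hmeas : Measurable fun ω => ⨅ g : G, dist (g • X ω) m ^ 2 :=
    Measurable.iInf fun g =>
      (((hiso g).continuous.dist continuous_const).pow 2).measurable.comp hX
  refine ((hX2.add (integrable_const (dist t m ^ 2))).const_mul 2).mono'
    hmeas.aestronglyMeasurable (ae_of_all _ fun ω => ?_)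
  rw [norm_eq_abs, abs_of_nonneg (iInf_nonneg fun g => sq_nonneg _)]
  exact hbound ω

theorem iInf_dist_smul_le_of_subgaussian [InnerProductSpace ℝ E] [IsProbabilityMeasure μ]
    [Fintype G] (hiso : ∀ g : G, Isometry (fun x : E => g • x)) {X : Ω → E} (hX : Measurable X)
    {t₀ : E} {σ : ℝ} (hσ : 0 ≤ σ)
    (hint : ∀ w, Integrable (fun ω => exp ⟪X ω - t₀, w⟫) μ)
    (hmgf : ∀ w, ∫ ω, exp ⟪X ω - t₀, w⟫ ∂μ ≤ exp (σ ^ 2 * ‖w‖ ^ 2 / 2))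
    (hX2 : Integrable (fun ω => ‖X ω - t₀‖ ^ 2) μ) {m₀ : E}
    (hmin : ∫ ω, ⨅ g : G, dist (g • X ω) m₀ ^ 2 ∂μ ≤ ∫ ω, ⨅ g : G, dist (g • X ω) t₀ ^ 2 ∂μ) :
    ⨅ g : G, dist (g • t₀) m₀ ≤ σ * √(8 * log (Fintype.card G)) := by
  have : Nonempty G := ⟨1⟩
  set S := fun ω => ⨆ g : G, (2 * ⟪X ω - t₀, g • m₀ - t₀⟫ - ‖g • m₀ - t₀‖ ^ 2)
  have hF : ∀ ω, ⨅ g : G, dist (g • X ω) m₀ ^ 2 = ‖X ω - t₀‖ ^ 2 - S ω := fun ω =>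
    iInf_dist_smul_sq_eq_sub_iSup hiso _ _ _
  have hFint := integrable_iInf_dist_smul_sq hiso hX hX2
  have hSint : Integrable S μ :=
    (hX2.sub (hFint m₀)).congr (ae_of_all _ fun ω => by simp only [Pi.sub_apply, hF]; ring)
  have hS0 : 0 ≤ ∫ ω, S ω ∂μ := by
    have hF_t₀ : ∫ ω, ⨅ g : G, dist (g • X ω) t₀ ^ 2 ∂μ ≤ ∫ ω, ‖X ω - t₀‖ ^ 2 ∂μ :=
      integral_mono (hFint t₀) hX2 fun ω =>
        (ciInf_le (Finite.bddBelow_range _) 1).trans_eq (by rw [one_smul, dist_eq_norm])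
    have hF_m₀ := integral_sub hX2 hSint
    simp only [← hF] at hF_m₀
    linarith
  exact le_mul_sqrt_log_card_of_subgaussian hσ hint hmgf (iInf_nonneg fun g => dist_nonneg)
    (fun g => (iInf_dist_smul_le_dist_smul hiso t₀ m₀ g).trans_eq (dist_eq_norm _ _)) hSint hS0

end IsometricAction

section IsotropicGaussian

variable {ι : Type*} [Fintype ι]

noncomputable def isotropicGaussian (t₀ : EuclideanSpace ℝ ι) (v : ℝ≥0) :
    Measure (EuclideanSpace ℝ ι) :=
  Measure.map (⇑(EuclideanSpace.equiv ι ℝ).symm) (Measure.pi fun i => gaussianReal (t₀ i) v)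

lemma integral_exp_mul_sub_gaussianReal (c t : ℝ) (v : ℝ≥0) :
    ∫ y, exp (t * (y - c)) ∂gaussianReal c v = exp (v * t ^ 2 / 2) := by
  simpa [mgf] using
    mgf_gaussianReal (X := (· - c)) (gaussianReal_map_sub_const (μ := c) (v := v) c) t

lemma integrable_exp_mul_sub_gaussianReal (c t : ℝ) (v : ℝ≥0) :
    Integrable (fun y => exp (t * (y - c))) (gaussianReal c v) := by
  rw [← mgf_pos_iff, mgf, integral_exp_mul_sub_gaussianReal]
  exact exp_pos _

lemma exp_inner_equiv_symm_sub_eq_prod (t₀ w : EuclideanSpace ℝ ι) (y : ι → ℝ) :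
    exp ⟪(EuclideanSpace.equiv ι ℝ).symm y - t₀, w⟫ = ∏ i, exp (w i * (y i - t₀ i)) := by
  rw [← exp_sum]
  simp [PiLp.inner_apply, mul_comm]

lemma integrable_exp_inner_sub_isotropicGaussian (t₀ w : EuclideanSpace ℝ ι) (v : ℝ≥0) :
    Integrable (fun x => exp ⟪x - t₀, w⟫) (isotropicGaussian t₀ v) := by
  rw [isotropicGaussian, integrable_map_measure (by fun_prop) (by fun_prop)]
  simp only [Function.comp_def, exp_inner_equiv_symm_sub_eq_prod]
  exact Integrable.fintype_prod fun i => integrable_exp_mul_sub_gaussianReal _ _ _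

lemma integral_exp_inner_sub_isotropicGaussian (t₀ w : EuclideanSpace ℝ ι) (v : ℝ≥0) :
    ∫ x, exp ⟪x - t₀, w⟫ ∂isotropicGaussian t₀ v = exp (v * ‖w‖ ^ 2 / 2) := by
  rw [isotropicGaussian, integral_map (by fun_prop) (by fun_prop)]
  simp only [exp_inner_equiv_symm_sub_eq_prod]
  rw [integral_fintype_prod_eq_prod (fun i y => exp (w i * (y - t₀ i))),
    EuclideanSpace.real_norm_sq_eq, mul_sum, sum_div, exp_sum]
  simp only [integral_exp_mul_sub_gaussianReal]

lemma integrable_norm_sub_sq_isotropicGaussian (t₀ : EuclideanSpace ℝ ι) (v : ℝ≥0) :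
    Integrable (fun x => ‖x - t₀‖ ^ 2) (isotropicGaussian t₀ v) := by
  rw [isotropicGaussian, integrable_map_measure (by fun_prop) (by fun_prop)]
  simp only [Function.comp_def, EuclideanSpace.real_norm_sq_eq, PiLp.sub_apply,
    PiLp.continuousLinearEquiv_symm_apply]
  refine integrable_finsetSum _ fun i _ =>
    integrable_comp_eval (X := fun _ => ℝ) (f := fun y => (y - t₀ i) ^ 2) ?_
  exact ((memLp_id_gaussianReal' 2 (by simp)).sub (memLp_const (t₀ i))).integrable_sq

end IsotropicGaussian

/-- Upper bound of the consistency bias for a finite group acting by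
isometries on `ℝⁿ` and Gaussian noise `X ∼ N(t₀, s² Id)`: if `m⋆` globally
minimizes the quotient variance then `d_Q([t₀],[m⋆]) ≤ s√(8 log|G|)`. -/
theorem stmt18 {n : ℕ} {G Ω : Type*} [Group G] [Fintype G]
    [MulAction G (EuclideanSpace ℝ (Fin n))]
    (hiso : ∀ g : G, Isometry (fun x : EuclideanSpace ℝ (Fin n) => g • x))
    [MeasurableSpace Ω] (μ : Measure Ω) [IsProbabilityMeasure μ]
    (X : Ω → EuclideanSpace ℝ (Fin n)) (hmeas : Measurable X)
    (t₀ : EuclideanSpace ℝ (Fin n)) (s : ℝ≥0)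
    (hgauss : Measure.map X μ
      = Measure.map (⇑(EuclideanSpace.equiv (Fin n) ℝ).symm)
          (Measure.pi fun i => gaussianReal (t₀ i) (s ^ 2)))
    (m₀ : EuclideanSpace ℝ (Fin n))
    (hmin : ∀ m : EuclideanSpace ℝ (Fin n),
      (∫ ω, ⨅ g : G, dist (g • X ω) m₀ ^ 2 ∂μ)
        ≤ ∫ ω, ⨅ g : G, dist (g • X ω) m ^ 2 ∂μ) :
    (⨅ g : G, dist (g • t₀) m₀)
      ≤ s * Real.sqrt (8 * Real.log (Fintype.card G)) := by
  have hlaw : Measure.map X μ = isotropicGaussian t₀ (s ^ 2) := hgauss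
  have hintegrable : ∀ {f : EuclideanSpace ℝ (Fin n) → ℝ},
      Integrable f (isotropicGaussian t₀ (s ^ 2)) → Integrable (fun ω => f (X ω)) μ :=
    fun hf => (hlaw ▸ hf).comp_measurable hmeas
  refine iInf_dist_smul_le_of_subgaussian hiso hmeas s.coe_nonneg
    (fun w => hintegrable (integrable_exp_inner_sub_isotropicGaussian t₀ w _))
    (fun w => ?_) (hintegrable (integrable_norm_sub_sq_isotropicGaussian t₀ _)) (hmin t₀)
  rw [← integral_map (f := fun x => exp ⟪x - t₀, w⟫) hmeas.aemeasurable (by fun_prop), hlaw,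
    integral_exp_inner_sub_isotropicGaussian]
  push_cast
  rfl
end
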